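/- arXiv:math/0103152 — 6 statements merged into one kernel-verified Lean document; each statement's English description precedes it below -/
import Mathlib

section
/- The permutation 123 and the permutation 132 are Wilf-equivalent: for every positive integer n, the number of permutations of {1,...,n} avoiding the pattern 123 equals the number avoiding the pattern 132. -/
/-- Classical pattern containment: `π` contains the pattern `τ` if some subsequence of `π`
(one-line notation) is order-isomorphic to `τ`. -/
def PattContains {k n : ℕ} (τ : Fin k → Fin k) (π : Fin n → Fin n) : Prop :=
  ∃ f : Fin k ↪o Fin n, ∀ a b : Fin k, τ a < τ b ↔ π (f a) < π (f b)

/-- The number of permutations of `{1,...,n}` avoiding the pattern `τ`. -/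
noncomputable def avoiders {k : ℕ} (τ : Fin k → Fin k) (n : ℕ) : ℕ :=
  Nat.card {π : Equiv.Perm (Fin n) // ¬ PattContains τ ⇑π}

open Finset
section
variable {n : ℕ}

def IsLMin (f : Fin n → Fin n) (p : Fin n) : Prop := ∀ j, j < p → f p < f j

instance (f : Fin n → Fin n) (p : Fin n) : Decidable (IsLMin f p) := by
  unfold IsLMin; infer_instance

def Sset (f : Fin n → Fin n) (p : Fin n) : Finset (Fin n) :=
  Finset.univ.filter fun v => (∃ j, ∃ _ : j < p, f j < v) ∧ ¬ ∃ j, ∃ _ : j < p, f j = v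

noncomputable def gre (π : Equiv.Perm (Fin n)) (pick : Finset (Fin n) → Fin n) (p : Fin n) :
    Fin n :=
  have prev : ∀ j : Fin n, j < p → Fin n := fun j _ => gre π pick j
  if IsLMin (⇑π) p then π p
  else pick (Finset.univ.filter fun v =>
    (∃ j, ∃ h : j < p, prev j h < v) ∧ ¬ ∃ j, ∃ h : j < p, prev j h = v)
termination_by p

lemma gre_eq (π : Equiv.Perm (Fin n)) (pick : Finset (Fin n) → Fin n) (p : Fin n) :
    gre π pick p = if IsLMin (⇑π) p then π p else pick (Sset (gre π pick) p) := by
  rw [gre]; rfl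

lemma mem_Sset {f : Fin n → Fin n} {p v : Fin n} :
    v ∈ Sset f p ↔ (∃ j, j < p ∧ f j < v) ∧ ∀ j, j < p → f j ≠ v := by
  simp [Sset]
end

section Main
variable {n : ℕ} (π : Equiv.Perm (Fin n)) (pick : Finset (Fin n) → Fin n)
  (Hpick : ∀ s : Finset (Fin n), s.Nonempty → pick s ∈ s)

/-- The full invariant of the greedy rearrangement. -/
def GreP (π : Equiv.Perm (Fin n)) (pick : Finset (Fin n) → Fin n) (p : Fin n) : Prop :=
  (∀ j, j < p → gre π pick j ≠ gre π pick p) ∧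
  (IsLMin (⇑π) p → gre π pick p = π p) ∧
  (¬ IsLMin (⇑π) p →
    (∃ j, j < p ∧ IsLMin (⇑π) j ∧ gre π pick j < gre π pick p) ∧
    (Sset (gre π pick) p).Nonempty ∧
    gre π pick p = pick (Sset (gre π pick) p))

include Hpick in
lemma gre_main : ∀ p : Fin n, GreP π pick p := by
  have key : ∀ m : ℕ, ∀ p : Fin n, p.val < m → GreP π pick p := by
    intro m
    induction m with
    | zero => intro p hp; omega
    | succ m IH =>
      intro p hp
      by_cases hmin : IsLMin (⇑π) p
      · have hval : gre π pick p = π p := by rw [gre_eq, if_pos hmin]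
        refine ⟨?_, fun _ => hval, fun h => absurd hmin h⟩
        intro j hj
        have hj' : j.val < m := by have := hj; omega
        by_cases hjm : IsLMin (⇑π) j
        · have : gre π pick j = π j := (IH j hj').2.1 hjm
          rw [this, hval]
          intro he
          exact absurd (π.injective he) (Fin.ne_of_lt hj)
        · obtain ⟨i, hip, himin, hlt⟩ := ((IH j hj').2.2 hjm).1
          have : gre π pick i = π i := (IH i (by have := hip.trans hj; omega)).2.1 himin
          have h1 : π p < π i := hmin i (hip.trans hj)
          rw [hval]
          intro he
          rw [← he] at h1
          rw [this] at hlt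
          exact absurd (h1.trans hlt) (lt_irrefl _)
      · -- non-minimum position: candidate set is nonempty
        -- there is an earlier, smaller entry of π
        have hex : ∃ j, j < p ∧ π j < π p := by
          unfold IsLMin at hmin
          push_neg at hmin
          obtain ⟨j, hj, hle⟩ := hmin
          refine ⟨j, hj, lt_of_le_of_ne hle ?_⟩
          intro he
          exact absurd (π.injective he) (Fin.ne_of_lt hj)
        obtain ⟨j₀, hj₀, hj₀lt⟩ := hex
        -- the running minimum m₀ of π before p
        have hne : ((Finset.Iio p).image (⇑π)).Nonempty :=
          ⟨π j₀, Finset.mem_image.2 ⟨j₀, Finset.mem_Iio.2 hj₀, rfl⟩⟩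
        set m₀ := ((Finset.Iio p).image (⇑π)).min' hne with hm₀
        obtain ⟨i₀, hi₀p, hi₀⟩ : ∃ i₀, i₀ < p ∧ π i₀ = m₀ := by
          have := Finset.min'_mem _ hne
          rw [Finset.mem_image] at this
          obtain ⟨i₀, hi, he⟩ := this
          exact ⟨i₀, Finset.mem_Iio.1 hi, he⟩
        have hm₀le : ∀ j, j < p → m₀ ≤ π j := fun j hj =>
          Finset.min'_le _ _ (Finset.mem_image.2 ⟨j, Finset.mem_Iio.2 hj, rfl⟩)
        have hi₀min : IsLMin (⇑π) i₀ := by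
          intro j hj
          rw [hi₀]
          exact lt_of_le_of_ne (hm₀le j (hj.trans hi₀p))
            (fun he => absurd (π.injective (hi₀ ▸ he.symm)) (Fin.ne_of_lt hj))
        have hgi₀ : gre π pick i₀ = m₀ := by
          rw [(IH i₀ (by have := hi₀p; omega)).2.1 hi₀min, hi₀]
        -- every earlier gre π pick-value is ≥ m₀
        have hlow : ∀ j, j < p → m₀ ≤ gre π pick j := by
          intro j hj
          have hj' : j.val < m := by have := hj; omega
          by_cases hjm : IsLMin (⇑π) j
          · rw [(IH j hj').2.1 hjm]; exact hm₀le j hj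
          · obtain ⟨i, hij, himin, hlt⟩ := ((IH j hj').2.2 hjm).1
            have : gre π pick i = π i := (IH i (by have := hij.trans hj; omega)).2.1 himin
            exact le_of_lt (lt_of_le_of_lt (this ▸ hm₀le i (hij.trans hj)) hlt)
        -- the prefix of gre π pick is injective
        have hinj : Set.InjOn (gre π pick) (Finset.Iio p : Finset (Fin n)) := by
          intro a ha b hb hab
          simp only [Finset.coe_Iio, Set.mem_Iio] at ha hb
          by_contra hne'
          rcases lt_or_gt_of_ne hne' with h | h
          · exact (IH b (by have := hb; omega)).1 a h hab
          · exact (IH a (by have := ha; omega)).1 b h hab.symm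
        set used := (Finset.Iio p).image (gre π pick) with hused
        have husedcard : used.card = p.val := by
          rw [hused, Finset.card_image_of_injOn hinj, Fin.card_Iio]
        have hm₀used : m₀ ∈ used :=
          Finset.mem_image.2 ⟨i₀, Finset.mem_Iio.2 hi₀p, hgi₀⟩
        -- counting: values below m₀ live at positions after p in π
        have hcount : m₀.val + p.val + 1 ≤ n := by
          have hmap : ∀ v ∈ Finset.Iio m₀, π.symm v ∈ Finset.Ioi p := by
            intro v hv
            rw [Finset.mem_Iio] at hv
            rw [Finset.mem_Ioi]
            rcases lt_trichotomy (π.symm v) p with h | h | h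
            · exact absurd (π.apply_symm_apply v ▸ hm₀le _ h) (not_le.2 hv)
            · exfalso
              have : π p = v := by rw [← h, π.apply_symm_apply]
              have hpp : m₀ ≤ π j₀ := hm₀le j₀ hj₀
              have : v < π p := this ▸ hv.trans_le (hpp.trans (le_of_lt hj₀lt))
              omega
            · exact h
          have hinj2 : Set.InjOn (⇑π.symm) (Finset.Iio m₀ : Finset (Fin n)) :=
            fun a _ b _ h => π.symm.injective h
          have := Finset.card_le_card_of_injOn _ hmap hinj2
          rw [Fin.card_Iio, Fin.card_Ioi] at this
          omega
        -- find an unused value above m₀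
        have hSne : (Sset (gre π pick) p).Nonempty := by
          have hsub : (Finset.Ioi m₀ \ used.erase m₀).Nonempty := by
            rw [← Finset.card_pos]
            have h1 : (Finset.Ioi m₀ \ used.erase m₀).card ≥
                (Finset.Ioi m₀).card - (used.erase m₀).card := Finset.le_card_sdiff _ _
            rw [Fin.card_Ioi, Finset.card_erase_of_mem hm₀used, husedcard] at h1
            omega
          obtain ⟨v, hv⟩ := hsub
          rw [Finset.mem_sdiff, Finset.mem_Ioi] at hv
          obtain ⟨hv1, hv2⟩ := hv
          have hvnotused : v ∉ used := by
            intro hvu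
            exact hv2 (Finset.mem_erase.2 ⟨Fin.ne_of_gt hv1, hvu⟩)
          refine ⟨v, mem_Sset.2 ⟨⟨i₀, hi₀p, hgi₀ ▸ hv1⟩, ?_⟩⟩
          intro j hj he
          exact hvnotused (Finset.mem_image.2 ⟨j, Finset.mem_Iio.2 hj, he⟩)
        have hgp : gre π pick p = pick (Sset (gre π pick) p) := by rw [gre_eq, if_neg hmin]
        have hgpS : gre π pick p ∈ Sset (gre π pick) p := hgp ▸ Hpick _ hSne
        rw [mem_Sset] at hgpS
        obtain ⟨⟨j₁, hj₁p, hj₁lt⟩, hunused⟩ := hgpS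
        refine ⟨fun j hj => hunused j hj, fun h => absurd h hmin, fun _ => ⟨?_, hSne, hgp⟩⟩
        exact ⟨i₀, hi₀p, hi₀min, lt_of_le_of_lt (hgi₀ ▸ hlow j₁ hj₁p) hj₁lt⟩
  intro p
  exact key (p.val + 1) p (by omega)

end Main

section Derived
variable {n : ℕ} (π : Equiv.Perm (Fin n)) (pick : Finset (Fin n) → Fin n)
  (Hpick : ∀ s : Finset (Fin n), s.Nonempty → pick s ∈ s)

include Hpick in
lemma gre_injective : Function.Injective (gre π pick) := by
  intro a b hab
  by_contra hne
  rcases lt_or_gt_of_ne hne with h | h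
  · exact (gre_main π pick Hpick b).1 a h hab
  · exact (gre_main π pick Hpick a).1 b h hab.symm

include Hpick in
lemma gre_bijective : Function.Bijective (gre π pick) :=
  Finite.injective_iff_bijective.1 (gre_injective π pick Hpick)

/-- The greedy rearrangement as a permutation. -/
noncomputable def greP : Equiv.Perm (Fin n) :=
  Equiv.ofBijective (gre π pick) (gre_bijective π pick Hpick)

lemma greP_apply (p : Fin n) : greP π pick Hpick p = gre π pick p := rfl

include Hpick in
lemma gre_isLMin (p : Fin n) : IsLMin (gre π pick) p ↔ IsLMin (⇑π) p := by
  constructor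
  · intro h
    by_contra hmin
    obtain ⟨⟨j, hjp, _, hlt⟩, _, _⟩ := (gre_main π pick Hpick p).2.2 hmin
    exact absurd (h j hjp) (not_lt.2 (le_of_lt hlt))
  · intro hmin j hj
    have hval : gre π pick p = π p := (gre_main π pick Hpick p).2.1 hmin
    by_cases hjm : IsLMin (⇑π) j
    · rw [hval, (gre_main π pick Hpick j).2.1 hjm]
      exact hmin j hj
    · obtain ⟨⟨i, hij, himin, hlt⟩, _, _⟩ := (gre_main π pick Hpick j).2.2 hjm
      have : gre π pick i = π i := (gre_main π pick Hpick i).2.1 himin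
      rw [hval]
      exact lt_trans (this ▸ hmin i (hij.trans hj)) hlt

include Hpick in
lemma gre_lrData (p : Fin n) :
    (if IsLMin (gre π pick) p then some (gre π pick p) else none) =
    (if IsLMin (⇑π) p then some (π p) else none) := by
  by_cases hmin : IsLMin (⇑π) p
  · rw [if_pos ((gre_isLMin π pick Hpick p).2 hmin), if_pos hmin,
      (gre_main π pick Hpick p).2.1 hmin]
  · rw [if_neg (fun h => hmin ((gre_isLMin π pick Hpick p).1 h)), if_neg hmin]

end Derived

section Picks
variable {n : ℕ} [NeZero n]

noncomputable def pickMin (s : Finset (Fin n)) : Fin n :=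
  if h : s.Nonempty then s.min' h else default

noncomputable def pickMax (s : Finset (Fin n)) : Fin n :=
  if h : s.Nonempty then s.max' h else default

lemma pickMin_mem : ∀ s : Finset (Fin n), s.Nonempty → pickMin s ∈ s := fun s h => by
  rw [pickMin, dif_pos h]; exact s.min'_mem h

lemma pickMax_mem : ∀ s : Finset (Fin n), s.Nonempty → pickMax s ∈ s := fun s h => by
  rw [pickMax, dif_pos h]; exact s.max'_mem h

lemma pickMin_le {s : Finset (Fin n)} (h : s.Nonempty) {v : Fin n} (hv : v ∈ s) :
    pickMin s ≤ v := by rw [pickMin, dif_pos h]; exact s.min'_le v hv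

lemma le_pickMax {s : Finset (Fin n)} (h : s.Nonempty) {v : Fin n} (hv : v ∈ s) :
    v ≤ pickMax s := by rw [pickMax, dif_pos h]; exact s.le_max' v hv

end Picks

section Patterns
variable {n : ℕ}

def Con123 (f : Fin n → Fin n) : Prop :=
  ∃ i j k : Fin n, i < j ∧ j < k ∧ f i < f j ∧ f j < f k

def Con132 (f : Fin n → Fin n) : Prop :=
  ∃ i j k : Fin n, i < j ∧ j < k ∧ f i < f k ∧ f k < f j

end Patterns

section Avoid
variable {n : ℕ} [NeZero n] (π : Equiv.Perm (Fin n))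

lemma gre_avoids132 : ¬ Con132 (gre π pickMin) := by
  rintro ⟨i, j, k, hij, hjk, hik, hkj⟩
  have hjmin : ¬ IsLMin (⇑π) j := by
    intro h
    have h2 : IsLMin (gre π pickMin) j := (gre_isLMin π pickMin pickMin_mem j).2 h
    exact absurd (h2 i hij) (not_lt.2 (hik.trans hkj).le)
  obtain ⟨_, hSne, hval⟩ := (gre_main π pickMin pickMin_mem j).2.2 hjmin
  have hmem : gre π pickMin k ∈ Sset (gre π pickMin) j := by
    refine mem_Sset.2 ⟨⟨i, hij, hik⟩, fun j' hj' he => ?_⟩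
    have : j' = k := gre_injective π pickMin pickMin_mem he
    exact absurd (this ▸ hj'.trans hjk) (lt_irrefl _)
  have := hval ▸ pickMin_le hSne hmem
  exact absurd (this.trans_lt hkj) (lt_irrefl _)

lemma gre_avoids123 : ¬ Con123 (gre π pickMax) := by
  rintro ⟨i, j, k, hij, hjk, hij2, hjk2⟩
  have hjmin : ¬ IsLMin (⇑π) j := by
    intro h
    have h2 : IsLMin (gre π pickMax) j := (gre_isLMin π pickMax pickMax_mem j).2 h
    exact absurd (h2 i hij) (not_lt.2 hij2.le)
  obtain ⟨_, hSne, hval⟩ := (gre_main π pickMax pickMax_mem j).2.2 hjmin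
  have hmem : gre π pickMax k ∈ Sset (gre π pickMax) j := by
    refine mem_Sset.2 ⟨⟨i, hij, hij2.trans hjk2⟩, fun j' hj' he => ?_⟩
    have : j' = k := gre_injective π pickMax pickMax_mem he
    exact absurd (this ▸ hj'.trans hjk) (lt_irrefl _)
  have := hval ▸ le_pickMax hSne hmem
  exact absurd (hjk2.trans_le this) (lt_irrefl _)

end Avoid

section Formula
variable {n : ℕ} [NeZero n] (σ : Equiv.Perm (Fin n))

lemma mem_Sset_self {p : Fin n} (hmin : ¬ IsLMin (⇑σ) p) : σ p ∈ Sset (⇑σ) p := by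
  refine mem_Sset.2 ⟨?_, fun j hj he => absurd (σ.injective he) (Fin.ne_of_lt hj)⟩
  unfold IsLMin at hmin
  push_neg at hmin
  obtain ⟨j, hj, hle⟩ := hmin
  exact ⟨j, hj, lt_of_le_of_ne hle fun he => absurd (σ.injective he) (Fin.ne_of_lt hj)⟩

lemma formula132 (hav : ¬ Con132 (⇑σ)) :
    ∀ p, ¬ IsLMin (⇑σ) p → σ p = pickMin (Sset (⇑σ) p) := by
  intro p hmin
  have hmem := mem_Sset_self σ hmin
  have hne : (Sset (⇑σ) p).Nonempty := ⟨_, hmem⟩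
  refine le_antisymm ?_ (pickMin_le hne hmem)
  rw [pickMin, dif_pos hne]
  refine Finset.le_min' _ _ _ ?_
  intro v hv
  by_contra hvp
  push_neg at hvp
  rw [mem_Sset] at hv
  obtain ⟨⟨i, hip, hiv⟩, hunused⟩ := hv
  set k := σ.symm v with hk
  have hkv : σ k = v := σ.apply_symm_apply v
  have hkp : p < k := by
    rcases lt_trichotomy k p with h | h | h
    · exact absurd (hkv) (hunused k h)
    · exact absurd (h ▸ hkv) (Fin.ne_of_lt hvp).symm
    · exact h
  exact hav ⟨i, p, k, hip, hkp, hkv ▸ hiv, hkv ▸ hvp⟩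

lemma formula123 (hav : ¬ Con123 (⇑σ)) :
    ∀ p, ¬ IsLMin (⇑σ) p → σ p = pickMax (Sset (⇑σ) p) := by
  intro p hmin
  have hmem := mem_Sset_self σ hmin
  have hne : (Sset (⇑σ) p).Nonempty := ⟨_, hmem⟩
  refine le_antisymm (le_pickMax hne hmem) ?_
  rw [pickMax, dif_pos hne]
  refine Finset.max'_le _ _ _ ?_
  intro v hv
  by_contra hvp
  push_neg at hvp
  rw [mem_Sset] at hv
  obtain ⟨⟨i, hip, hiv⟩, hunused⟩ := hv
  set k := σ.symm v with hk
  have hkv : σ k = v := σ.apply_symm_apply v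
  have hkp : p < k := by
    rcases lt_trichotomy k p with h | h | h
    · exact absurd (hkv) (hunused k h)
    · exact absurd (h ▸ hkv) (Fin.ne_of_gt hvp).symm
    · exact h
  -- need an earlier entry below σ p
  have hex : ∃ j, j < p ∧ σ j < σ p := by
    unfold IsLMin at hmin
    push_neg at hmin
    obtain ⟨j, hj, hle⟩ := hmin
    exact ⟨j, hj, lt_of_le_of_ne hle fun he => absurd (σ.injective he) (Fin.ne_of_lt hj)⟩
  obtain ⟨j, hjp, hjlt⟩ := hex
  exact hav ⟨j, p, k, hjp, hkp, hjlt, hkv ▸ hvp⟩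

end Formula

section Unique
variable {n : ℕ}

lemma unique_formula (pick : Finset (Fin n) → Fin n) (σ τ : Equiv.Perm (Fin n))
    (hdata : ∀ p, (if IsLMin (⇑σ) p then some (σ p) else none) =
      (if IsLMin (⇑τ) p then some (τ p) else none))
    (h1 : ∀ p, ¬ IsLMin (⇑σ) p → σ p = pick (Sset (⇑σ) p))
    (h2 : ∀ p, ¬ IsLMin (⇑τ) p → τ p = pick (Sset (⇑τ) p)) : σ = τ := by
  have key : ∀ m : ℕ, ∀ p : Fin n, p.val < m → σ p = τ p := by
    intro m
    induction m with
    | zero => intro p hp; omega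
    | succ m IH =>
      intro p hp
      have hdp := hdata p
      by_cases hs : IsLMin (⇑σ) p
      · rw [if_pos hs] at hdp
        by_cases ht : IsLMin (⇑τ) p
        · rw [if_pos ht] at hdp
          exact Option.some_injective _ hdp
        · rw [if_neg ht] at hdp; exact absurd hdp (Option.some_ne_none _)
      · have ht : ¬ IsLMin (⇑τ) p := by
          intro ht
          rw [if_neg hs, if_pos ht] at hdp
          exact absurd hdp.symm (Option.some_ne_none _)
        have hSeq : Sset (⇑σ) p = Sset (⇑τ) p := by
          ext v
          rw [mem_Sset, mem_Sset]
          constructor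
          · rintro ⟨⟨j, hjp, hjv⟩, hun⟩
            refine ⟨⟨j, hjp, (IH j (by have := hjp; omega)) ▸ hjv⟩, fun j hjp' he => ?_⟩
            exact hun j hjp' ((IH j (by have := hjp'; omega)).symm ▸ he)
          · rintro ⟨⟨j, hjp, hjv⟩, hun⟩
            refine ⟨⟨j, hjp, (IH j (by have := hjp; omega)).symm ▸ hjv⟩, fun j hjp' he => ?_⟩
            exact hun j hjp' ((IH j (by have := hjp'; omega)) ▸ he)
        rw [h1 p hs, h2 p ht, hSeq]
  exact Equiv.ext fun p => key (p.val + 1) p (by omega)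

end Unique

section Bridge
variable {n : ℕ}

lemma pattContains123_iff (f : Fin n → Fin n) :
    PattContains (![0,1,2] : Fin 3 → Fin 3) f ↔ Con123 f := by
  constructor
  · rintro ⟨e, he⟩
    refine ⟨e 0, e 1, e 2, e.strictMono (by decide), e.strictMono (by decide), ?_, ?_⟩
    · exact (he 0 1).1 (by decide)
    · exact (he 1 2).1 (by decide)
  · rintro ⟨i, j, k, hij, hjk, h1, h2⟩
    have hmono : StrictMono (![i, j, k] : Fin 3 → Fin n) := by
      intro a b hab
      fin_cases a <;> fin_cases b <;>
        simp_all <;> first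
          | exact hij | exact hjk | exact hij.trans hjk
          | exact absurd hab (by decide)
    refine ⟨OrderEmbedding.ofStrictMono _ hmono, ?_⟩
    intro a b
    have hcoe : ∀ c : Fin 3, (OrderEmbedding.ofStrictMono _ hmono) c =
        (![i,j,k] : Fin 3 → Fin n) c := fun c => rfl
    rw [hcoe, hcoe]
    fin_cases a <;> fin_cases b <;> simp <;>
      first
        | exact h1 | exact h2 | exact h1.trans h2
        | exact h1.le | exact h2.le | exact (h1.trans h2).le

lemma pattContains132_iff (f : Fin n → Fin n) :
    PattContains (![0,2,1] : Fin 3 → Fin 3) f ↔ Con132 f := by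
  constructor
  · rintro ⟨e, he⟩
    refine ⟨e 0, e 1, e 2, e.strictMono (by decide), e.strictMono (by decide), ?_, ?_⟩
    · exact (he 0 2).1 (by decide)
    · exact (he 2 1).1 (by decide)
  · rintro ⟨i, j, k, hij, hjk, h1, h2⟩
    have hmono : StrictMono (![i, j, k] : Fin 3 → Fin n) := by
      intro a b hab
      fin_cases a <;> fin_cases b <;>
        simp_all <;> first
          | exact hij | exact hjk | exact hij.trans hjk
          | exact absurd hab (by decide)
    refine ⟨OrderEmbedding.ofStrictMono _ hmono, ?_⟩
    intro a b
    have hcoe : ∀ c : Fin 3, (OrderEmbedding.ofStrictMono _ hmono) c =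
        (![i,j,k] : Fin 3 → Fin n) c := fun c => rfl
    rw [hcoe, hcoe]
    fin_cases a <;> fin_cases b <;> simp <;>
      first
        | exact h1 | exact h2 | exact h1.trans h2
        | exact h1.le | exact h2.le | exact (h1.trans h2).le

end Bridge

/-- The patterns 123 and 132 are Wilf-equivalent. -/
theorem wilf_equiv_123_132 :
    ∀ n : ℕ, 0 < n →
      avoiders (![0,1,2] : Fin 3 → Fin 3) n = avoiders (![0,2,1] : Fin 3 → Fin 3) n := by
  intro n hn
  haveI : NeZero n := ⟨hn.ne'⟩
  unfold avoiders
  refine Nat.card_congr ?_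
  have data_eq : ∀ (π : Equiv.Perm (Fin n)) (pick : Finset (Fin n) → Fin n)
      (Hpick : ∀ s : Finset (Fin n), s.Nonempty → pick s ∈ s) (p : Fin n),
      (if IsLMin (⇑(greP π pick Hpick)) p then some (greP π pick Hpick p) else none) =
      (if IsLMin (⇑π) p then some (π p) else none) := by
    intro π pick Hpick p
    exact gre_lrData π pick Hpick p
  refine
    { toFun := fun σ => ⟨greP σ.1 pickMin pickMin_mem, ?_⟩
      invFun := fun σ => ⟨greP σ.1 pickMax pickMax_mem, ?_⟩
      left_inv := ?_
      right_inv := ?_ }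
  · rw [pattContains132_iff]
    exact gre_avoids132 σ.1
  · rw [pattContains123_iff]
    exact gre_avoids123 σ.1
  · rintro ⟨σ, hσ⟩
    rw [pattContains123_iff] at hσ
    refine Subtype.ext ?_
    refine unique_formula pickMax _ σ (fun p => ?_) (fun p => ?_) (formula123 σ hσ)
    · exact (data_eq _ pickMax pickMax_mem p).trans (data_eq σ pickMin pickMin_mem p)
    · exact formula123 _ (gre_avoids123 _) p
  · rintro ⟨σ, hσ⟩
    rw [pattContains132_iff] at hσ
    refine Subtype.ext ?_
    refine unique_formula pickMin _ σ (fun p => ?_) (fun p => ?_) (formula132 σ hσ)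
    · exact (data_eq _ pickMin pickMin_mem p).trans (data_eq σ pickMax pickMax_mem p)
    · exact formula132 _ (gre_avoids132 _) p
end

section
/- For every positive integer n, the number of permutations of {1,...,n} avoiding the pattern 123 equals the n-th Catalan number. -/
/-!
Insert the maximum `n + 1` into a 123-avoiding permutation `π` of length `n`; every permutation of
length `n + 1` arises exactly once in this way. Inserting at position `i` creates no 123 exactly
when the first `i` entries of `π` decrease, i.e. when `i ≤ r` for `r` the length of the longest
decreasing prefix of `π`, and the result then has longest decreasing prefix of length `r + 1` if
`i = 0` and of length `i` otherwise. Hence the number `a(n, m)` of 123-avoiders of length `n` with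
`r ≥ m` satisfies `a(n + 1, m) = a(n + 1, m + 1) + a(n, m - 1)` for `m ≥ 1`. This is the
recursion of the ballot numbers `C(2n - m, n) - C(2n - m, n + 1)`, and at `m = 0` these are the
Catalan numbers.
-/

open Finset Equiv

lemma Fin.insertNth_apply_of_lt {α : Type*} {n : ℕ} {f : Fin n → α} {a : α}
    {i p : Fin (n + 1)} (hp : p < i) :
    (i.insertNth a f : Fin (n + 1) → α) p = f (p.castPred (Fin.ne_last_of_lt hp)) := by
  simp [Fin.insertNth_apply_below hp]

section LinearOrder

variable {α β : Type*} [LinearOrder α] [LinearOrder β] {n : ℕ}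

def Avoids123 (f : Fin n → α) : Prop :=
  ¬∃ i j k, i < j ∧ j < k ∧ f i < f j ∧ f j < f k

open Classical in
noncomputable def antitonePrefixLength (f : Fin n → α) : ℕ :=
  Nat.findGreatest (fun m => AntitoneOn f {j | (j : ℕ) < m}) n

lemma antitonePrefixLength_le (f : Fin n → α) : antitonePrefixLength f ≤ n :=
  Nat.findGreatest_le n

lemma le_antitonePrefixLength_iff {f : Fin n → α} {m : ℕ} (hm : m ≤ n) :
    m ≤ antitonePrefixLength f ↔ AntitoneOn f {j | (j : ℕ) < m} := by
  classical
  refine ⟨fun h => ?_, fun h => Nat.le_findGreatest hm h⟩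
  have hmax : AntitoneOn f {j | (j : ℕ) < antitonePrefixLength f} :=
    Nat.findGreatest_spec (P := fun m => AntitoneOn f {j : Fin n | (j : ℕ) < m}) (Nat.zero_le n)
      fun _ hj => absurd hj (Nat.not_lt_zero _)
  exact hmax.mono fun j hj => lt_of_lt_of_le hj h

lemma avoids123_comp_iff {g : α → β} (hg : StrictMono g) (f : Fin n → α) :
    Avoids123 (g ∘ f) ↔ Avoids123 f := by
  simp [Avoids123, hg.lt_iff_lt]

lemma antitonePrefixLength_comp {g : α → β} (hg : StrictMono g) (f : Fin n → α) :
    antitonePrefixLength (g ∘ f) = antitonePrefixLength f := by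
  simp [antitonePrefixLength, AntitoneOn, hg.le_iff_le]

variable {f : Fin n → α} {a : α}

lemma avoids123_insertNth_iff (ha : ∀ j, f j < a) (i : Fin (n + 1)) :
    Avoids123 (i.insertNth a f) ↔ Avoids123 f ∧ AntitoneOn f {j | (j : ℕ) < i} := by
  have hle_a : ∀ p, (i.insertNth a f : Fin (n + 1) → α) p ≤ a := fun p => by
    rcases i.eq_self_or_eq_succAbove p with rfl | ⟨p, rfl⟩ <;> simp [(ha _).le]
  constructor
  · intro h
    have hf : Avoids123 f := fun ⟨p, q, r, hpq, hqr, h₁, h₂⟩ =>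
      h ⟨i.succAbove p, i.succAbove q, i.succAbove r, by simpa, by simpa, by simpa, by simpa⟩
    refine ⟨hf, fun p _ q hq hpq => ?_⟩
    by_contra! h₁
    have hq : q.castSucc < i := by simpa [Fin.lt_def] using hq
    refine h ⟨i.succAbove p, i.succAbove q, i, ?_, ?_, by simpa, by simpa using ha q⟩
    · exact Fin.succAbove_lt_succAbove_iff.2 (lt_of_le_of_ne hpq (by rintro rfl; simp at h₁))
    · rwa [Fin.succAbove_of_castSucc_lt _ _ hq]
  · rintro ⟨hf, hpre⟩ ⟨p, q, r, hpq, hqr, h₁, h₂⟩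
    rcases i.eq_self_or_eq_succAbove q with rfl | ⟨q, rfl⟩
    · rw [Fin.insertNth_apply_same] at h₂
      exact absurd (hle_a r) (not_le.2 h₂)
    rcases i.eq_self_or_eq_succAbove p with rfl | ⟨p, rfl⟩
    · rw [Fin.insertNth_apply_same, Fin.insertNth_apply_succAbove] at h₁
      exact absurd (ha q) (not_lt.2 h₁.le)
    rw [Fin.succAbove_lt_succAbove_iff] at hpq
    simp only [Fin.insertNth_apply_succAbove] at h₁
    rcases i.eq_self_or_eq_succAbove r with rfl | ⟨r, rfl⟩
    · have hq : (q : ℕ) < r := by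
        simpa [Fin.lt_def] using (Fin.succAbove_lt_iff_castSucc_lt _ _).1 hqr
      exact absurd (hpre (lt_trans (Fin.lt_def.1 hpq) hq) hq hpq.le) (not_le.2 h₁)
    · rw [Fin.succAbove_lt_succAbove_iff] at hqr
      simp only [Fin.insertNth_apply_succAbove] at h₂
      exact hf ⟨p, q, r, hpq, hqr, h₁, h₂⟩

lemma antitoneOn_cons_iff (ha : ∀ j, f j ≤ a) (m : ℕ) :
    AntitoneOn (Fin.cons a f : Fin (n + 1) → α) {j | (j : ℕ) < m + 1} ↔
      AntitoneOn f {j | (j : ℕ) < m} := by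
  constructor
  · intro h p hp q hq hpq
    simpa using h (a := p.succ) (b := q.succ) (by simpa using hp) (by simpa using hq) (by simpa)
  · intro h p hp q hq hpq
    cases p using Fin.cases with
    | zero => cases q using Fin.cases <;> simp [ha]
    | succ p =>
      cases q using Fin.cases with
      | zero => exact absurd hpq (by simp)
      | succ q => simpa using h (by simpa using hp) (by simpa using hq) (by simpa using hpq)

lemma antitonePrefixLength_cons (ha : ∀ j, f j ≤ a) :
    antitonePrefixLength (Fin.cons a f : Fin (n + 1) → α) = antitonePrefixLength f + 1 := by
  have hf := antitonePrefixLength_le f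
  have hcons := antitonePrefixLength_le (Fin.cons a f : Fin (n + 1) → α)
  apply le_antisymm
  · obtain h | h :=
      Nat.eq_zero_or_eq_succ_pred (antitonePrefixLength (Fin.cons a f : Fin (n + 1) → α))
    · omega
    · have hanti := (le_antitonePrefixLength_iff hcons).1 le_rfl
      rw [h, antitoneOn_cons_iff ha, ← le_antitonePrefixLength_iff (by omega)] at hanti
      omega
  · rw [le_antitonePrefixLength_iff (by omega), antitoneOn_cons_iff ha,
      ← le_antitonePrefixLength_iff hf]

lemma antitonePrefixLength_insertNth (ha : ∀ j, f j < a) {i : Fin (n + 1)} (hi : i ≠ 0)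
    (hpre : AntitoneOn f {j | (j : ℕ) < i}) :
    antitonePrefixLength (i.insertNth a f : Fin (n + 1) → α) = i := by
  have hin : (i : ℕ) ≤ n := i.is_le
  have hi0 : (i : ℕ) ≠ 0 := fun h => hi (Fin.ext h)
  apply le_antisymm
  · by_contra! h
    have hanti := (le_antitonePrefixLength_iff (m := i + 1) (by omega)).1 h
    have hp : (⟨i - 1, by omega⟩ : Fin (n + 1)) < i :=
      Fin.lt_def.2 (show (i : ℕ) - 1 < i by omega)
    have := hanti (a := ⟨i - 1, by omega⟩) (b := i) (Nat.lt_succ_of_le (Nat.sub_le _ _))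
      (Nat.lt_succ_self _) hp.le
    rw [Fin.insertNth_apply_of_lt hp, Fin.insertNth_apply_same] at this
    exact absurd (ha _) (not_lt.2 this)
  · rw [le_antitonePrefixLength_iff (by omega)]
    intro p hp q hq hpq
    rw [Fin.insertNth_apply_of_lt (Fin.lt_def.2 hp), Fin.insertNth_apply_of_lt (Fin.lt_def.2 hq)]
    exact hpre (by simpa using hp) (by simpa using hq) (by simpa using hpq)

lemma antitonePrefixLength_insertNth_of_antitoneOn (ha : ∀ j, f j < a) (i : Fin (n + 1))
    (hpre : AntitoneOn f {j | (j : ℕ) < i}) :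
    antitonePrefixLength (i.insertNth a f : Fin (n + 1) → α) =
      if i = 0 then antitonePrefixLength f + 1 else i := by
  split_ifs with hi
  · rw [hi, Fin.insertNth_zero', antitonePrefixLength_cons fun j => (ha j).le]
  · exact antitonePrefixLength_insertNth ha hi hpre

end LinearOrder

section Perm

variable {n : ℕ}

def insertMax (π : Perm (Fin n)) (i : Fin (n + 1)) : Perm (Fin (n + 1)) :=
  (finSuccEquiv' i).trans (π.optionCongr.trans finSuccEquivLast.symm)

lemma coe_insertMax (π : Perm (Fin n)) (i : Fin (n + 1)) :
    ⇑(insertMax π i) = i.insertNth (Fin.last n) (Fin.castSucc ∘ π) := by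
  funext j
  rcases i.eq_self_or_eq_succAbove j with rfl | ⟨j, rfl⟩ <;> simp [insertMax]

lemma insertMax_injective :
    Function.Injective fun p : Perm (Fin n) × Fin (n + 1) => insertMax p.1 p.2 := by
  rintro ⟨π, i⟩ ⟨σ, k⟩ (h : insertMax π i = insertMax σ k)
  obtain rfl : i = k := (insertMax σ k).injective <| by
    simpa [coe_insertMax] using (DFunLike.congr_fun h i).symm
  refine Prod.ext (Equiv.ext fun j => Fin.castSucc_injective _ ?_) rfl
  simpa [coe_insertMax] using DFunLike.congr_fun h (i.succAbove j)

noncomputable def insertMaxEquiv : Perm (Fin n) × Fin (n + 1) ≃ Perm (Fin (n + 1)) :=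
  Equiv.ofBijective _ <| (Fintype.bijective_iff_injective_and_card _).2
    ⟨insertMax_injective, by simp [Fintype.card_perm, Nat.factorial_succ, mul_comm]⟩

end Perm

section Count

open Classical

noncomputable def countAvoiders123 (n m : ℕ) : ℕ :=
  #{π : Perm (Fin n) | Avoids123 ⇑π ∧ m ≤ antitonePrefixLength ⇑π}

lemma card_filter_insertMax_avoids123 (π : Perm (Fin n)) {m : ℕ} (hm : 1 ≤ m) :
    #{i | Avoids123 ⇑(insertMax π i) ∧ antitonePrefixLength ⇑(insertMax π i) = m} =
      if Avoids123 ⇑π ∧ m ≤ antitonePrefixLength ⇑π + 1 then 1 else 0 := by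
  have ha : ∀ j, (Fin.castSucc ∘ π) j < Fin.last n := fun j => Fin.castSucc_lt_last _
  have hcs : StrictMono (Fin.castSucc : Fin n → Fin (n + 1)) := Fin.strictMono_castSucc
  have hr := antitonePrefixLength_le ⇑π
  by_cases hπ : Avoids123 ⇑π
  · set r := antitonePrefixLength ⇑π
    have hsite (i : Fin (n + 1)) :
        (AntitoneOn (Fin.castSucc ∘ π) {j | (j : ℕ) < i} ∧
            antitonePrefixLength (i.insertNth (Fin.last n) (Fin.castSucc ∘ π)) = m) ↔
          (i : ℕ) ≤ r ∧ (if i = 0 then r + 1 else (i : ℕ)) = m := by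
      rw [← le_antitonePrefixLength_iff i.is_le, antitonePrefixLength_comp hcs]
      refine and_congr_right fun hi => ?_
      rw [antitonePrefixLength_insertNth_of_antitoneOn ha i, antitonePrefixLength_comp hcs]
      rwa [← le_antitonePrefixLength_iff i.is_le, antitonePrefixLength_comp hcs]
    simp only [coe_insertMax, avoids123_insertNth_iff ha, avoids123_comp_iff hcs, hπ, true_and,
      hsite]
    split_ifs with h
    · refine card_eq_one.2 ⟨if hmr : m = r + 1 then 0 else ⟨m, by omega⟩, ?_⟩
      ext i
      simp only [mem_filter, mem_univ, true_and, mem_singleton, Fin.ext_iff]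
      split_ifs <;> simp_all <;> omega
    · refine card_eq_zero.2 (filter_false_of_mem fun i _ ⟨hi, him⟩ => ?_)
      split_ifs at him <;> omega
  · simp [coe_insertMax, avoids123_insertNth_iff ha, avoids123_comp_iff hcs, hπ]

lemma card_avoids123_antitonePrefixLength_eq {n m : ℕ} (hm : 1 ≤ m) :
    #{τ : Perm (Fin (n + 1)) | Avoids123 ⇑τ ∧ antitonePrefixLength ⇑τ = m} =
      countAvoiders123 n (m - 1) := by
  simp only [countAvoiders123, card_filter]
  rw [← insertMaxEquiv.sum_comp, Fintype.sum_prod_type]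
  refine sum_congr rfl fun π _ => ?_
  simp only [← card_filter, insertMaxEquiv, Equiv.ofBijective_apply,
    card_filter_insertMax_avoids123 π hm, Nat.sub_le_iff_le_add]

lemma countAvoiders123_succ {n m : ℕ} (hm : 1 ≤ m) :
    countAvoiders123 (n + 1) m =
      countAvoiders123 (n + 1) (m + 1) + countAvoiders123 n (m - 1) := by
  rw [← card_avoids123_antitonePrefixLength_eq hm]
  simp only [countAvoiders123, card_filter, ← sum_add_distrib]
  refine sum_congr rfl fun τ _ => ?_
  by_cases h : Avoids123 ⇑τ
  · simp only [h, true_and]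
    split_ifs <;> omega
  · simp [h]

lemma countAvoiders123_eq_zero {n m : ℕ} (h : n < m) : countAvoiders123 n m = 0 := by
  refine card_eq_zero.2 (filter_false_of_mem fun π _ => ?_)
  have := antitonePrefixLength_le ⇑π
  omega

lemma countAvoiders123_succ_zero (n : ℕ) :
    countAvoiders123 (n + 1) 0 = countAvoiders123 (n + 1) 1 := by
  refine congrArg card (filter_congr fun π _ => and_congr_right fun _ => ?_)
  simp only [zero_le, true_iff]
  rw [le_antitonePrefixLength_iff (by omega)]
  intro p hp q hq _
  obtain rfl : p = q := Fin.ext (by simp at hp hq; omega)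
  exact le_rfl

lemma countAvoiders123_zero_zero : countAvoiders123 0 0 = 1 := by
  simp [countAvoiders123, Avoids123]

end Count

def ballot (n m : ℕ) : ℤ := (2 * n - m).choose n - (2 * n - m).choose (n + 1)

lemma ballot_succ {n m : ℕ} (hm : 1 ≤ m) (hmn : m ≤ n + 1) :
    ballot (n + 1) m = ballot (n + 1) (m + 1) + ballot n (m - 1) := by
  rw [ballot, ballot, ballot, show 2 * (n + 1) - m = 2 * n + 1 - m + 1 by omega,
    show 2 * (n + 1) - (m + 1) = 2 * n + 1 - m by omega,
    show 2 * n - (m - 1) = 2 * n + 1 - m by omega,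
    Nat.choose_succ_succ, Nat.choose_succ_succ]
  push_cast
  ring

lemma ballot_succ_zero (n : ℕ) : ballot (n + 1) 0 = ballot (n + 1) 1 := by
  have h₁ := Nat.choose_succ_succ (2 * n + 1) n
  have h₂ := Nat.choose_succ_succ (2 * n + 1) (n + 1)
  rw [ballot, ballot, show 2 * (n + 1) - 0 = 2 * n + 1 + 1 by omega,
    show 2 * (n + 1) - 1 = 2 * n + 1 by omega, h₁, h₂, Nat.choose_symm_half]
  push_cast
  ring

lemma catalan_eq_ballot (n : ℕ) : (catalan n : ℤ) = ballot n 0 := by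
  have hcat : ((n : ℤ) + 1) * catalan n = (2 * n).choose n := by
    exact_mod_cast
      (succ_mul_catalan_eq_centralBinom n).trans (Nat.centralBinom_eq_two_mul_choose n)
  have hsucc : ((2 * n).choose (n + 1) : ℤ) * (n + 1) = (2 * n).choose n * n := by
    exact_mod_cast
      (Nat.choose_succ_right_eq (2 * n) n).trans (by rw [two_mul, Nat.add_sub_cancel])
  refine mul_left_cancel₀ (by positivity : (n : ℤ) + 1 ≠ 0) ?_
  rw [hcat, ballot, Nat.sub_zero]
  linear_combination hsucc

lemma countAvoiders123_eq_ballot : ∀ n m, m ≤ n → (countAvoiders123 n m : ℤ) = ballot n m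
  | 0, m, h => by
    obtain rfl : m = 0 := by omega
    simp [countAvoiders123_zero_zero, ballot]
  | n + 1, m, h => by
    have ih := countAvoiders123_eq_ballot n
    -- downward induction on `k`, starting at `k = n + 2` where both sides vanish
    have hpos : ∀ d k, k + d = n + 2 → 1 ≤ k →
        (countAvoiders123 (n + 1) k : ℤ) = ballot (n + 1) k := by
      intro d
      induction d with
      | zero =>
        intro k hk _
        rw [countAvoiders123_eq_zero (by omega), ballot, show 2 * (n + 1) - k = n by omega]
        simp [Nat.choose_eq_zero_iff]
      | succ d ihd =>
        intro k hk hk1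
        rw [countAvoiders123_succ hk1, ballot_succ hk1 (by omega)]
        push_cast
        rw [ihd (k + 1) (by omega) (by omega), ih (k - 1) (by omega)]
    rcases Nat.eq_zero_or_pos m with rfl | hm
    · rw [countAvoiders123_succ_zero, ballot_succ_zero]
      exact hpos (n + 1) 1 (by omega) le_rfl
    · exact hpos (n + 2 - m) m (by omega) hm

lemma pattContains_012_iff {n : ℕ} (π : Fin n → Fin n) :
    PattContains (![0, 1, 2] : Fin 3 → Fin 3) π ↔
      ∃ i j k, i < j ∧ j < k ∧ π i < π j ∧ π j < π k := by
  constructor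
  · rintro ⟨f, hf⟩
    exact ⟨f 0, f 1, f 2, f.strictMono (by decide), f.strictMono (by decide),
      (hf 0 1).1 (by decide), (hf 1 2).1 (by decide)⟩
  · rintro ⟨i, j, k, hij, hjk, h₁, h₂⟩
    have hf : StrictMono ![i, j, k] := Fin.strictMono_iff_lt_succ.2 fun t => by
      fin_cases t
      exacts [hij, hjk]
    have hπf : StrictMono (π ∘ ![i, j, k]) := Fin.strictMono_iff_lt_succ.2 fun t => by
      fin_cases t
      exacts [h₁, h₂]
    refine ⟨OrderEmbedding.ofStrictMono _ hf, fun a b => ?_⟩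
    have hid : (![0, 1, 2] : Fin 3 → Fin 3) = id := by decide
    simpa [hid] using hπf.lt_iff_lt.symm

open Classical in
lemma avoiders_012_eq_countAvoiders123 (n : ℕ) :
    avoiders (![0, 1, 2] : Fin 3 → Fin 3) n = countAvoiders123 n 0 := by
  simp only [avoiders, countAvoiders123, (pattContains_012_iff _).not, Nat.card_eq_fintype_card,
    Fintype.card_subtype, zero_le, and_true, Avoids123]

/-- The number of 123-avoiding permutations of `{1,...,n}` is the `n`-th Catalan number. -/
theorem avoiders_123_eq_catalan :
    ∀ n : ℕ, 0 < n → avoiders (![0,1,2] : Fin 3 → Fin 3) n = catalan n := by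
  intro n _
  have h := countAvoiders123_eq_ballot n 0 n.zero_le
  rw [← catalan_eq_ballot] at h
  rw [avoiders_012_eq_countAvoiders123]
  exact_mod_cast h
end

section
/- For every positive integer n, the number of permutations of {1,...,n} avoiding the pattern 132 equals the n-th Catalan number. -/
def Has132 {n : ℕ} {α : Type*} [LinearOrder α] (f : Fin n → α) : Prop :=
  ∃ i j k : Fin n, i < j ∧ j < k ∧ f i < f k ∧ f k < f j

lemma pattContains_iff {n : ℕ} (π : Fin n → Fin n) :
    PattContains (![0,2,1] : Fin 3 → Fin 3) π ↔ Has132 π := by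
  constructor
  · rintro ⟨f, hf⟩
    exact ⟨f 0, f 1, f 2, f.strictMono (by decide), f.strictMono (by decide),
      (hf 0 2).1 (by decide), (hf 2 1).1 (by decide)⟩
  · rintro ⟨i, j, k, hij, hjk, h1, h2⟩
    refine ⟨OrderEmbedding.ofStrictMono ![i,j,k] ?_, ?_⟩
    · intro a b hab
      fin_cases a <;> fin_cases b <;> simp_all <;>
        first
          | exact hij | exact hjk | exact hij.trans hjk
          | exact absurd hab (by decide)
    · intro a b
      fin_cases a <;> fin_cases b <;>
        simp [OrderEmbedding.ofStrictMono] <;>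
        first
          | exact h1 | exact h2 | exact h1.trans h2
          | exact h1.le | exact h2.le | exact (h1.trans h2).le

section Build
variable {n : ℕ}

/-- Position `x` (for `x < j`) viewed inside `Fin (n+1)`. -/
def castL (j : Fin (n+1)) (x : Fin (j:ℕ)) : Fin (n+1) :=
  ⟨(x:ℕ), by have := x.isLt; have := j.isLt; omega⟩

/-- Position `j+1+y` viewed inside `Fin (n+1)`. -/
def castR (j : Fin (n+1)) (y : Fin (n - (j:ℕ))) : Fin (n+1) :=
  ⟨(j:ℕ) + 1 + (y:ℕ), by have := y.isLt; omega⟩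

def buildFun (j : Fin (n+1)) (σ : Equiv.Perm (Fin (j:ℕ)))
    (ρ : Equiv.Perm (Fin (n - (j:ℕ)))) (x : Fin (n+1)) : Fin (n+1) :=
  if h : (x:ℕ) < (j:ℕ) then
    ⟨n - (j:ℕ) + ((σ ⟨(x:ℕ), h⟩ : Fin (j:ℕ)) : ℕ), by
      have h1 := (σ ⟨(x:ℕ), h⟩).isLt
      have h2 : (j:ℕ) ≤ n := Nat.lt_succ_iff.mp j.isLt
      omega⟩
  else if h2 : (x:ℕ) = (j:ℕ) then ⟨n, Nat.lt_succ_self n⟩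
  else
    ⟨((ρ ⟨(x:ℕ) - (j:ℕ) - 1, by have := x.isLt; omega⟩ : Fin (n - (j:ℕ))) : ℕ), by
      have := (ρ ⟨(x:ℕ) - (j:ℕ) - 1, by have := x.isLt; omega⟩).isLt
      omega⟩

variable {j : Fin (n+1)} {σ : Equiv.Perm (Fin (j:ℕ))} {ρ : Equiv.Perm (Fin (n - (j:ℕ)))}

lemma buildFun_lt {x : Fin (n+1)} (h : (x:ℕ) < (j:ℕ)) :
    (buildFun j σ ρ x : ℕ) = n - (j:ℕ) + ((σ ⟨(x:ℕ), h⟩ : Fin (j:ℕ)) : ℕ) := by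
  simp [buildFun, h]

lemma buildFun_mid {x : Fin (n+1)} (h : (x:ℕ) = (j:ℕ)) :
    (buildFun j σ ρ x : ℕ) = n := by
  have h1 : ¬ (x:ℕ) < (j:ℕ) := by omega
  simp [buildFun, h1, h]

lemma buildFun_gt {x : Fin (n+1)} (h : (j:ℕ) < (x:ℕ)) (h' : (x:ℕ) - (j:ℕ) - 1 < n - (j:ℕ)) :
    (buildFun j σ ρ x : ℕ) = ((ρ ⟨(x:ℕ) - (j:ℕ) - 1, h'⟩ : Fin (n - (j:ℕ))) : ℕ) := by
  have h1 : ¬ (x:ℕ) < (j:ℕ) := by omega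
  have h2 : ¬ (x:ℕ) = (j:ℕ) := by omega
  simp [buildFun, h1, h2]

lemma buildFun_le (x : Fin (n+1)) : (buildFun j σ ρ x : ℕ) ≤ n :=
  Nat.lt_succ_iff.mp (buildFun j σ ρ x).isLt

lemma buildFun_left_ge {x : Fin (n+1)} (h : (x:ℕ) < (j:ℕ)) :
    n - (j:ℕ) ≤ (buildFun j σ ρ x : ℕ) := by
  rw [buildFun_lt h]; omega

lemma buildFun_left_lt {x : Fin (n+1)} (h : (x:ℕ) < (j:ℕ)) :
    (buildFun j σ ρ x : ℕ) < n := by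
  rw [buildFun_lt h]
  have h1 := (σ ⟨(x:ℕ), h⟩).isLt
  have h2 : (j:ℕ) ≤ n := Nat.lt_succ_iff.mp j.isLt
  omega

lemma buildFun_right_lt {x : Fin (n+1)} (h : (j:ℕ) < (x:ℕ)) :
    (buildFun j σ ρ x : ℕ) < n - (j:ℕ) := by
  have h' : (x:ℕ) - (j:ℕ) - 1 < n - (j:ℕ) := by have := x.isLt; omega
  rw [buildFun_gt h h']
  exact (ρ _).isLt

lemma buildFun_injective (j : Fin (n+1)) (σ : Equiv.Perm (Fin (j:ℕ)))
    (ρ : Equiv.Perm (Fin (n - (j:ℕ)))) : Function.Injective (buildFun j σ ρ) := by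
  intro x y hxy
  have hxy' : (buildFun j σ ρ x : ℕ) = (buildFun j σ ρ y : ℕ) := congrArg Fin.val hxy
  rcases lt_trichotomy ((x:ℕ)) ((j:ℕ)) with hx | hx | hx <;>
    rcases lt_trichotomy ((y:ℕ)) ((j:ℕ)) with hy | hy | hy
  · -- both left
    rw [buildFun_lt hx, buildFun_lt hy] at hxy'
    have : (σ ⟨(x:ℕ), hx⟩ : Fin (j:ℕ)) = σ ⟨(y:ℕ), hy⟩ := Fin.ext (by omega)
    have h3 := σ.injective this
    rw [Fin.mk.injEq] at h3
    exact Fin.ext h3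
  · exact absurd hxy' (by rw [buildFun_mid hy]; exact (buildFun_left_lt hx).ne)
  · exact absurd hxy' (by
      have := buildFun_left_ge (σ := σ) (ρ := ρ) hx
      have := buildFun_right_lt (σ := σ) (ρ := ρ) hy
      omega)
  · exact absurd hxy'.symm (by rw [buildFun_mid hx]; exact (buildFun_left_lt hy).ne)
  · exact Fin.ext (hx.trans hy.symm)
  · exact absurd hxy' (by
      rw [buildFun_mid hx]
      have := buildFun_right_lt (σ := σ) (ρ := ρ) hy
      have hj : (j:ℕ) ≤ n := Nat.lt_succ_iff.mp j.isLt
      omega)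
  · exact absurd hxy' (by
      have := buildFun_left_ge (σ := σ) (ρ := ρ) hy
      have := buildFun_right_lt (σ := σ) (ρ := ρ) hx
      omega)
  · exact absurd hxy'.symm (by
      rw [buildFun_mid hy]
      have := buildFun_right_lt (σ := σ) (ρ := ρ) hx
      have hj : (j:ℕ) ≤ n := Nat.lt_succ_iff.mp j.isLt
      omega)
  · -- both right
    have hx' : (x:ℕ) - (j:ℕ) - 1 < n - (j:ℕ) := by have := x.isLt; omega
    have hy' : (y:ℕ) - (j:ℕ) - 1 < n - (j:ℕ) := by have := y.isLt; omega
    rw [buildFun_gt hx hx', buildFun_gt hy hy'] at hxy'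
    have : (ρ ⟨(x:ℕ) - (j:ℕ) - 1, hx'⟩ : Fin (n - (j:ℕ))) = ρ ⟨(y:ℕ) - (j:ℕ) - 1, hy'⟩ :=
      Fin.ext (by omega)
    have := congrArg Fin.val (ρ.injective this)
    simp only [] at this
    exact Fin.ext (by omega)

lemma buildFun_avoid (hσ : ¬Has132 ⇑σ) (hρ : ¬Has132 ⇑ρ) : ¬Has132 (buildFun j σ ρ) := by
  rintro ⟨i, p, k, hip, hpk, h1, h2⟩
  have hip' : (i:ℕ) < (p:ℕ) := hip
  have hpk' : (p:ℕ) < (k:ℕ) := hpk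
  have h1' : (buildFun j σ ρ i : ℕ) < (buildFun j σ ρ k : ℕ) := h1
  have h2' : (buildFun j σ ρ k : ℕ) < (buildFun j σ ρ p : ℕ) := h2
  rcases lt_trichotomy ((k:ℕ)) ((j:ℕ)) with hk | hk | hk
  · -- all three left
    have hi : (i:ℕ) < (j:ℕ) := by omega
    have hp : (p:ℕ) < (j:ℕ) := by omega
    rw [buildFun_lt hi, buildFun_lt hk] at h1'
    rw [buildFun_lt hk, buildFun_lt hp] at h2'
    exact hσ ⟨⟨(i:ℕ), hi⟩, ⟨(p:ℕ), hp⟩, ⟨(k:ℕ), hk⟩, Fin.mk_lt_mk.mpr hip',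
      Fin.mk_lt_mk.mpr hpk', Fin.lt_def.mpr (by omega), Fin.lt_def.mpr (by omega)⟩
  · -- k = j : value n, but f k < f p ≤ n
    have := buildFun_le (j := j) (σ := σ) (ρ := ρ) p
    rw [buildFun_mid hk] at h2'
    omega
  · rcases lt_trichotomy ((i:ℕ)) ((j:ℕ)) with hi | hi | hi
    · -- i left, k right : f i ≥ n - j > f k
      have := buildFun_left_ge (σ := σ) (ρ := ρ) hi
      have := buildFun_right_lt (σ := σ) (ρ := ρ) hk
      omega
    · -- i = j : f i = n but f i < f k ≤ n
      have := buildFun_le (j := j) (σ := σ) (ρ := ρ) k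
      rw [buildFun_mid hi] at h1'
      omega
    · -- all three right
      have hp : (j:ℕ) < (p:ℕ) := by omega
      have hi' : (i:ℕ) - (j:ℕ) - 1 < n - (j:ℕ) := by have := i.isLt; omega
      have hp' : (p:ℕ) - (j:ℕ) - 1 < n - (j:ℕ) := by have := p.isLt; omega
      have hk' : (k:ℕ) - (j:ℕ) - 1 < n - (j:ℕ) := by have := k.isLt; omega
      rw [buildFun_gt hi hi', buildFun_gt hk hk'] at h1'
      rw [buildFun_gt hk hk', buildFun_gt hp hp'] at h2'
      exact hρ ⟨⟨(i:ℕ) - (j:ℕ) - 1, hi'⟩, ⟨(p:ℕ) - (j:ℕ) - 1, hp'⟩, ⟨(k:ℕ) - (j:ℕ) - 1, hk'⟩,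
        Fin.mk_lt_mk.mpr (by omega), Fin.mk_lt_mk.mpr (by omega),
        Fin.lt_def.mpr h1', Fin.lt_def.mpr h2'⟩

noncomputable def build (j : Fin (n+1)) (σ : Equiv.Perm (Fin (j:ℕ)))
    (ρ : Equiv.Perm (Fin (n - (j:ℕ)))) : Equiv.Perm (Fin (n+1)) :=
  Equiv.ofBijective _ ((Finite.injective_iff_bijective).mp (buildFun_injective j σ ρ))

lemma build_apply (x : Fin (n+1)) : build j σ ρ x = buildFun j σ ρ x := rfl

lemma decomp (π : Equiv.Perm (Fin (n+1))) (hπ : ¬Has132 ⇑π) :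
    ∃ (j : Fin (n+1)) (σ : Equiv.Perm (Fin (j:ℕ))) (ρ : Equiv.Perm (Fin (n - (j:ℕ)))),
      ¬Has132 ⇑σ ∧ ¬Has132 ⇑ρ ∧
      (∀ x : Fin (j:ℕ), (π (castL j x) : ℕ) = n - (j:ℕ) + ((σ x : Fin (j:ℕ)) : ℕ)) ∧
      (π j : ℕ) = n ∧
      (∀ y : Fin (n - (j:ℕ)), (π (castR j y) : ℕ) = ((ρ y : Fin (n - (j:ℕ))) : ℕ)) := by
  classical
  set j := π.symm (Fin.last n) with hjdef
  have hπj : π j = Fin.last n := π.apply_symm_apply _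
  have hπj' : (π j : ℕ) = n := by rw [hπj]; rfl
  have hne : ∀ x : Fin (n+1), x ≠ j → (π x : ℕ) < n := by
    intro x hx
    have h1 : π x ≠ Fin.last n := by
      intro h; exact hx (by rw [← hπj] at h; exact π.injective h)
    have h2 := (π x).isLt
    have h3 : (π x : ℕ) ≠ n := fun h => h1 (Fin.ext h)
    omega
  have cross : ∀ x y : Fin (n+1), (x:ℕ) < (j:ℕ) → (j:ℕ) < (y:ℕ) → (π y : ℕ) < (π x : ℕ) := by
    intro x y hx hy
    by_contra hcon
    push_neg at hcon
    have hxy : (π x : ℕ) ≠ (π y : ℕ) := by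
      intro h
      have := π.injective (Fin.ext h)
      rw [this] at hx; omega
    have hyj : y ≠ j := fun h => by rw [h] at hy; omega
    have hyn := hne y hyj
    exact hπ ⟨x, j, y, Fin.lt_def.mpr hx, Fin.lt_def.mpr hy,
      Fin.lt_def.mpr (by omega), Fin.lt_def.mpr (by omega)⟩
  have leftVals : ∀ x : Fin (n+1), (x:ℕ) < (j:ℕ) → n - (j:ℕ) ≤ (π x : ℕ) := by
    intro x hx
    have hsub : ((Finset.Ioi j).image fun y => (π y : ℕ)) ⊆ Finset.range (π x : ℕ) := by
      intro v hv
      simp only [Finset.mem_image, Finset.mem_Ioi] at hv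
      obtain ⟨y, hy, rfl⟩ := hv
      exact Finset.mem_range.mpr (cross x y hx (Fin.lt_def.mp hy))
    have hcard := Finset.card_le_card hsub
    rw [Finset.card_image_of_injective _ (fun a b h => π.injective (Fin.ext h)),
      Finset.card_range, Fin.card_Ioi] at hcard
    omega
  have rightVals : ∀ y : Fin (n+1), (j:ℕ) < (y:ℕ) → (π y : ℕ) < n - (j:ℕ) := by
    intro y hy
    have hjn : (j:ℕ) < n + 1 := j.isLt
    have hyn : (y:ℕ) ≤ n := Nat.lt_succ_iff.mp y.isLt
    have hyj : y ≠ j := fun h => by rw [h] at hy; omega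
    have hpyn := hne y hyj
    have hsub : ((Finset.Iio j).image fun x => (π x : ℕ)) ⊆ Finset.Ioc ((π y : ℕ)) (n-1) := by
      intro v hv
      simp only [Finset.mem_image, Finset.mem_Iio] at hv
      obtain ⟨x, hx, rfl⟩ := hv
      have hx' : (x:ℕ) < (j:ℕ) := Fin.lt_def.mp hx
      have hxj : x ≠ j := fun h => by rw [h] at hx'; omega
      have := hne x hxj
      exact Finset.mem_Ioc.mpr ⟨cross x y hx' hy, by omega⟩
    have hcard := Finset.card_le_card hsub
    rw [Finset.card_image_of_injective _ (fun a b h => π.injective (Fin.ext h)),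
      Nat.card_Ioc, Fin.card_Iio] at hcard
    omega
  -- the left pattern
  have hbσ : ∀ x : Fin (j:ℕ), (π (castL j x) : ℕ) - (n - (j:ℕ)) < (j:ℕ) := by
    intro x
    have hx : ((castL j x : Fin (n+1)) : ℕ) < (j:ℕ) := x.isLt
    have h1 := leftVals (castL j x) hx
    have h2 := hne (castL j x) (fun h => by rw [h] at hx; omega)
    have h3 := x.isLt
    have hjn : (j:ℕ) ≤ n := Nat.lt_succ_iff.mp j.isLt
    omega
  let σf : Fin (j:ℕ) → Fin (j:ℕ) := fun x => ⟨(π (castL j x) : ℕ) - (n - (j:ℕ)), hbσ x⟩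
  have σf_inj : Function.Injective σf := by
    intro a b hab
    have hab' : (π (castL j a) : ℕ) - (n - (j:ℕ)) = (π (castL j b) : ℕ) - (n - (j:ℕ)) :=
      congrArg Fin.val hab
    have h1 := leftVals (castL j a) a.isLt
    have h2 := leftVals (castL j b) b.isLt
    have h3 : (π (castL j a) : ℕ) = (π (castL j b) : ℕ) := by omega
    have h4 := π.injective (Fin.ext h3)
    have h5 : ((castL j a : Fin (n+1)) : ℕ) = ((castL j b : Fin (n+1)) : ℕ) :=
      congrArg Fin.val h4
    exact Fin.ext h5
  let σ : Equiv.Perm (Fin (j:ℕ)) := Equiv.ofBijective σf (Finite.injective_iff_bijective.mp σf_inj)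
  have σ_coe : ∀ x : Fin (j:ℕ), ((σ x : Fin (j:ℕ)) : ℕ) = (π (castL j x) : ℕ) - (n - (j:ℕ)) :=
    fun x => rfl
  have hσav : ¬Has132 ⇑σ := by
    rintro ⟨a, b, c, hab, hbc, h1, h2⟩
    have h1' := Fin.lt_def.mp h1
    have h2' := Fin.lt_def.mp h2
    rw [σ_coe, σ_coe] at h1' h2'
    have ga := leftVals (castL j a) a.isLt
    have gb := leftVals (castL j b) b.isLt
    have gc := leftVals (castL j c) c.isLt
    exact hπ ⟨castL j a, castL j b, castL j c,
      Fin.lt_def.mpr (Fin.lt_def.mp hab), Fin.lt_def.mpr (Fin.lt_def.mp hbc),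
      Fin.lt_def.mpr (by omega), Fin.lt_def.mpr (by omega)⟩
  -- the right pattern
  have hbρ : ∀ y : Fin (n - (j:ℕ)), (π (castR j y) : ℕ) < n - (j:ℕ) := by
    intro y
    exact rightVals (castR j y) (by simp [castR]; omega)
  let ρf : Fin (n - (j:ℕ)) → Fin (n - (j:ℕ)) := fun y => ⟨(π (castR j y) : ℕ), hbρ y⟩
  have ρf_inj : Function.Injective ρf := by
    intro a b hab
    have hab' : (π (castR j a) : ℕ) = (π (castR j b) : ℕ) := by
      simpa [ρf] using congrArg Fin.val hab
    have h4 := π.injective (Fin.ext hab')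
    have h5 : (j:ℕ) + 1 + (a:ℕ) = (j:ℕ) + 1 + (b:ℕ) := congrArg Fin.val h4
    exact Fin.ext (by omega)
  let ρ : Equiv.Perm (Fin (n - (j:ℕ))) :=
    Equiv.ofBijective ρf (Finite.injective_iff_bijective.mp ρf_inj)
  have ρ_coe : ∀ y, ((ρ y : Fin (n - (j:ℕ))) : ℕ) = (π (castR j y) : ℕ) := fun y => rfl
  have hρav : ¬Has132 ⇑ρ := by
    rintro ⟨a, b, c, hab, hbc, h1, h2⟩
    have h1' := Fin.lt_def.mp h1
    have h2' := Fin.lt_def.mp h2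
    rw [ρ_coe, ρ_coe] at h1' h2'
    exact hπ ⟨castR j a, castR j b, castR j c,
      Fin.lt_def.mpr (by simp [castR]; exact Fin.lt_def.mp hab),
      Fin.lt_def.mpr (by simp [castR]; exact Fin.lt_def.mp hbc),
      Fin.lt_def.mpr h1', Fin.lt_def.mpr h2'⟩
  refine ⟨j, σ, ρ, hσav, hρav, ?_, hπj', ρ_coe⟩
  intro x
  rw [σ_coe]
  have := leftVals (castL j x) x.isLt
  omega
end Build

-- appended after full_head + decomp
section Count
open Equiv

noncomputable def av (m : ℕ) : ℕ := Nat.card {π : Equiv.Perm (Fin m) // ¬Has132 ⇑π}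

lemma av_zero : av 0 = 1 := by
  have h : ∀ π : Equiv.Perm (Fin 0), ¬Has132 ⇑π := by
    rintro π ⟨i, -⟩; exact i.elim0
  rw [av, Nat.card_congr (Equiv.subtypeUnivEquiv h), Nat.card_eq_fintype_card,
    Fintype.card_perm]
  simp

lemma av_succ (n : ℕ) : av (n+1) = ∑ i : Fin (n+1), av (i:ℕ) * av (n - (i:ℕ)) := by
  classical
  haveI I : ∀ m : ℕ, Fintype {π : Equiv.Perm (Fin m) // ¬Has132 ⇑π} := fun m =>
    Fintype.ofFinite _
  -- forward map from the sigma type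
  set F : (Σ j : Fin (n+1), {σ : Equiv.Perm (Fin (j:ℕ)) // ¬Has132 ⇑σ} ×
      {ρ : Equiv.Perm (Fin (n - (j:ℕ))) // ¬Has132 ⇑ρ}) →
      {π : Equiv.Perm (Fin (n+1)) // ¬Has132 ⇑π} :=
    fun t => ⟨build t.1 t.2.1.1 t.2.2.1, buildFun_avoid t.2.1.2 t.2.2.2⟩ with hF
  have hinj : Function.Injective F := by
    rintro ⟨j1, ⟨σ1, hσ1⟩, ⟨ρ1, hρ1⟩⟩ ⟨j2, ⟨σ2, hσ2⟩, ⟨ρ2, hρ2⟩⟩ h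
    have hval : ∀ x, buildFun j1 σ1 ρ1 x = buildFun j2 σ2 ρ2 x := by
      intro x
      have := congrArg Subtype.val h
      exact DFunLike.congr_fun this x
    have hj : (j1:ℕ) = (j2:ℕ) := by
      have h2 := congrArg Fin.val (hval j1)
      rw [buildFun_mid rfl] at h2
      rcases lt_trichotomy ((j1:ℕ)) ((j2:ℕ)) with hc | hc | hc
      · rw [buildFun_lt hc] at h2
        have := (σ2 ⟨(j1:ℕ), hc⟩).isLt
        have hjn : (j2:ℕ) ≤ n := Nat.lt_succ_iff.mp j2.isLt
        omega
      · exact hc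
      · have h' : (j1:ℕ) - (j2:ℕ) - 1 < n - (j2:ℕ) := by have := j1.isLt; omega
        rw [buildFun_gt hc h'] at h2
        have := (ρ2 ⟨(j1:ℕ) - (j2:ℕ) - 1, h'⟩).isLt
        omega
    obtain rfl : j1 = j2 := Fin.ext hj
    have hσ : σ1 = σ2 := by
      apply Equiv.ext
      intro x
      have hcl : ((castL j1 x : Fin (n+1)) : ℕ) < (j1:ℕ) := x.isLt
      have h2 := congrArg Fin.val (hval (castL j1 x))
      rw [buildFun_lt hcl, buildFun_lt hcl] at h2
      have hx : (⟨((castL j1 x : Fin (n+1)) : ℕ), hcl⟩ : Fin (j1:ℕ)) = x := rfl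
      rw [hx] at h2
      exact Fin.ext (by omega)
    have hρ : ρ1 = ρ2 := by
      apply Equiv.ext
      intro y
      have hcr : (j1:ℕ) < ((castR j1 y : Fin (n+1)) : ℕ) := by simp [castR]; omega
      have h' : ((castR j1 y : Fin (n+1)) : ℕ) - (j1:ℕ) - 1 < n - (j1:ℕ) := by
        have := y.isLt; simp [castR]; omega
      have h2 := congrArg Fin.val (hval (castR j1 y))
      rw [buildFun_gt hcr h', buildFun_gt hcr h'] at h2
      have hy : (⟨((castR j1 y : Fin (n+1)) : ℕ) - (j1:ℕ) - 1, h'⟩ : Fin (n - (j1:ℕ))) = y := by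
        apply Fin.ext; simp [castR]; omega
      rw [hy] at h2
      exact Fin.ext h2
    subst hσ; subst hρ; rfl
  have hsurj : Function.Surjective F := by
    rintro ⟨π, hπ⟩
    obtain ⟨j, σ, ρ, hσ, hρ, hL, hM, hR⟩ := decomp π hπ
    refine ⟨⟨j, ⟨σ, hσ⟩, ⟨ρ, hρ⟩⟩, Subtype.ext ?_⟩
    apply Equiv.ext
    intro x
    apply Fin.ext
    show (buildFun j σ ρ x : ℕ) = (π x : ℕ)
    rcases lt_trichotomy ((x:ℕ)) ((j:ℕ)) with hx | hx | hx
    · rw [buildFun_lt hx]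
      have hc : castL j ⟨(x:ℕ), hx⟩ = x := rfl
      have := hL ⟨(x:ℕ), hx⟩
      rw [hc] at this
      omega
    · obtain rfl : x = j := Fin.ext hx
      rw [buildFun_mid rfl, hM]
    · have h' : (x:ℕ) - (j:ℕ) - 1 < n - (j:ℕ) := by have := x.isLt; omega
      rw [buildFun_gt hx h']
      have hc : castR j ⟨(x:ℕ) - (j:ℕ) - 1, h'⟩ = x := by
        apply Fin.ext; simp [castR]; omega
      have := hR ⟨(x:ℕ) - (j:ℕ) - 1, h'⟩
      rw [hc] at this
      omega
  have e := Equiv.ofBijective F ⟨hinj, hsurj⟩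
  rw [av, Nat.card_congr e.symm, Nat.card_eq_fintype_card, Fintype.card_sigma]
  refine Finset.sum_congr rfl fun i _ => ?_
  rw [Fintype.card_prod, av, av, Nat.card_eq_fintype_card, Nat.card_eq_fintype_card]

lemma av_eq_catalan : ∀ n : ℕ, av n = catalan n := by
  intro n
  induction n using Nat.strong_induction_on with
  | _ n ih =>
    match n with
    | 0 => rw [av_zero, catalan_zero]
    | m + 1 =>
      rw [av_succ, catalan_succ]
      refine Finset.sum_congr rfl fun i _ => ?_
      rw [ih (i:ℕ) (by have := i.isLt; omega), ih (m - (i:ℕ)) (by omega)]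

end Count


/-- The number of 132-avoiding permutations of `{1,...,n}` is the `n`-th Catalan number. -/
theorem avoiders_132_eq_catalan :
    ∀ n : ℕ, 0 < n → avoiders (![0,2,1] : Fin 3 → Fin 3) n = catalan n := by
  intro n _
  rw [avoiders,
    Nat.card_congr (Equiv.subtypeEquivRight fun π : Equiv.Perm (Fin n) =>
      not_congr (pattContains_iff ⇑π))]
  exact av_eq_catalan n
end

section
/- If permutation matrices A (of size k) and B (of size k) are shape-Wilf-equivalent, then for any permutation matrix C, the direct sums diag(A, C) and diag(B, C) are shape-Wilf-equivalent. -/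
/-- A Young diagram of size `n` (coordinates from the bottom-left, as in the paper):
`b i` is the length of the `i`-th row counted from the bottom, for `i < n`.
Rows get longer going up (top row is the largest), the staircase
`Y(n, n-1, ..., 1)` is contained (`i < b i`), and there are `n` columns (`b i ≤ n`). -/
def IsYoungShape (n : ℕ) (b : ℕ → ℕ) : Prop :=
  (∀ i j : ℕ, i ≤ j → j < n → b i ≤ b j) ∧ ∀ i : ℕ, i < n → i < b i ∧ b i ≤ n

/-- A transversal of the shape `b`, encoded as a permutation sending each column `i`
(from the left) to the row `π i` (from the bottom) of the unique 1 in that column: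
every cell `(column i, row π i)` must lie inside the diagram. -/
def IsTransversal (n : ℕ) (b : ℕ → ℕ) (π : Equiv.Perm (Fin n)) : Prop :=
  ∀ i : Fin n, (i : ℕ) < b (π i)

/-- The transversal `π` of the shape `b` contains the pattern `τ`: some `k` of its 1's
form a submatrix of the diagram (all crossing cells inside the diagram) identical to the
permutation matrix of `τ`. -/
def ShapeContains (n : ℕ) (b : ℕ → ℕ) {k : ℕ} (π : Fin n → Fin n) (τ : Fin k → Fin k) : Prop :=
  ∃ f : Fin k ↪o Fin n,
    (∀ a c : Fin k, τ a < τ c ↔ π (f a) < π (f c)) ∧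
    ∀ a c : Fin k, (f a : ℕ) < b (π (f c))

/-- The number of transversals of the shape `b` avoiding the pattern `τ`,
i.e. `|S_Y(τ)|`. -/
noncomputable def shapeAvoidCard (n : ℕ) (b : ℕ → ℕ) {k : ℕ} (τ : Fin k → Fin k) : ℕ :=
  Nat.card {π : Equiv.Perm (Fin n) // IsTransversal n b π ∧ ¬ ShapeContains n b ⇑π τ}

/-- Shape-Wilf-equivalence: equally many avoiders on every Young diagram. -/
def ShapeWilfEquiv {k l : ℕ} (τ : Fin k → Fin k) (σ : Fin l → Fin l) : Prop :=
  ∀ (n : ℕ) (b : ℕ → ℕ), IsYoungShape n b → shapeAvoidCard n b τ = shapeAvoidCard n b σ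

/-- The direct sum `diag(A, C)` of two permutation patterns, with `A` in the top-left
block (the first `k` positions take the `k` largest values via `α`) and `γ` in the
bottom-right block. -/
def blockSum {k m : ℕ} (α : Fin k → Fin k) (γ : Fin m → Fin m) (i : Fin (k + m)) :
    Fin (k + m) :=
  if h : (i : ℕ) < k then (α ⟨i, h⟩).addNat m
  else Fin.castLE (Nat.le_add_left m k)
    (γ ⟨(i : ℕ) - k, by have hi := i.isLt; omega⟩)

attribute [local instance] Classical.propDecidable

namespace BW

/-- equality of naturals from identical strict lower sets -/
lemma nat_eq_of_lt_iff {a b : ℕ} (h : ∀ x, x < a ↔ x < b) : a = b := by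
  rcases lt_trichotomy a b with h'|h'|h'
  · exact absurd ((h a).mpr h') (lt_irrefl a)
  · exact h'
  · exact absurd ((h b).mp h') (lt_irrefl b)

/-- A downward closed finset of naturals is an initial segment. -/
lemma mem_iff_lt_card (t : Finset ℕ) (ht : ∀ x y, x ≤ y → y ∈ t → x ∈ t) (x : ℕ) :
    x ∈ t ↔ x < t.card := by
  constructor
  · intro hx
    have h1 : Finset.Iic x ⊆ t := fun z hz => ht z x (Finset.mem_Iic.mp hz) hx
    have := Finset.card_le_card h1
    rw [Nat.card_Iic] at this; omega
  · intro hx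
    by_contra hxt
    have h1 : t ⊆ Finset.Iio x := by
      intro z hz
      rw [Finset.mem_Iio]
      by_contra hzx
      exact hxt (ht x z (by omega) hz)
    have := Finset.card_le_card h1
    rw [Nat.card_Iio] at this; omega

variable {n k j : ℕ}

section Supp

variable (b : ℕ → ℕ) (γ : Equiv.Perm (Fin j))

/-- `g` is a copy of `γ` strictly right of column `x` and strictly below row `y`,
with all crossing cells (including with column `x`) inside the diagram. -/
def SuppWit (π : Equiv.Perm (Fin n)) (x y : ℕ) (g : Fin j ↪o Fin n) : Prop :=
  (∀ a c : Fin j, γ a < γ c ↔ π (g a) < π (g c)) ∧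
  (∀ a : Fin j, x < (g a : ℕ)) ∧
  (∀ a : Fin j, ((π (g a)) : ℕ) < y) ∧
  (∀ a c : Fin j, ((g a) : ℕ) < b (π (g c))) ∧
  (∀ c : Fin j, x < b (π (g c)))

/-- The cell `(x, y)` is supported: there is a copy of `γ` strictly below-right of it. -/
def Supp (π : Equiv.Perm (Fin n)) (x y : ℕ) : Prop :=
  ∃ g : Fin j ↪o Fin n, SuppWit b γ π x y g

/-- length of row `y` in the subdiagram of supported cells -/
noncomputable def b1 (π : Equiv.Perm (Fin n)) (y : ℕ) : ℕ :=
  Nat.find (p := fun x => ¬(x < b y ∧ Supp b γ π x y)) ⟨b y, fun h => absurd h.1 (lt_irrefl _)⟩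

variable {b γ}

lemma Supp.mono {π : Equiv.Perm (Fin n)} {x y x' y' : ℕ} (hx : x' ≤ x) (hy : y ≤ y')
    (h : Supp b γ π x y) : Supp b γ π x' y' := by
  obtain ⟨g, h1, h2, h3, h4, h5⟩ := h
  exact ⟨g, h1, fun a => lt_of_le_of_lt hx (h2 a), fun a => lt_of_lt_of_le (h3 a) hy, h4,
    fun c => lt_of_le_of_lt hx (h5 c)⟩

lemma lt_b1 {π : Equiv.Perm (Fin n)} {x y : ℕ} :
    x < b1 b γ π y ↔ x < b y ∧ Supp b γ π x y := by
  constructor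
  · intro h
    have := Nat.find_min (p := fun x => ¬(x < b y ∧ Supp b γ π x y))
      ⟨b y, fun h => absurd h.1 (lt_irrefl _)⟩ h
    exact not_not.mp this
  · intro h
    by_contra hc
    push_neg at hc
    have hspec := Nat.find_spec (p := fun x => ¬(x < b y ∧ Supp b γ π x y))
      ⟨b y, fun h => absurd h.1 (lt_irrefl _)⟩
    exact hspec ⟨lt_of_le_of_lt hc h.1, h.2.mono hc le_rfl⟩

lemma b1_le {π : Equiv.Perm (Fin n)} (y : ℕ) : b1 b γ π y ≤ b y :=
  Nat.find_min' _ (fun h => absurd h.1 (lt_irrefl _))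

lemma b1_mono (hY : IsYoungShape n b) {π : Equiv.Perm (Fin n)} {y y' : ℕ}
    (h : y ≤ y') (h' : y' < n) : b1 b γ π y ≤ b1 b γ π y' := by
  by_contra hc
  push_neg at hc
  have h1 := lt_b1 (π := π) (b := b) (γ := γ) (x := b1 b γ π y') (y := y) |>.mp hc
  have h2 := (lt_b1 (π := π) (b := b) (γ := γ)).mpr
    ⟨lt_of_lt_of_le h1.1 (hY.1 y y' h h'), h1.2.mono le_rfl h⟩
  exact absurd h2 (lt_irrefl _)

end Supp

section Enum

/-- the `x`-th smallest element of `s`, as a natural number (`n` if out of range) -/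
noncomputable def enum (s : Finset (Fin n)) (x : ℕ) : ℕ :=
  if hx : x < s.card then ((s.orderIsoOfFin rfl ⟨x, hx⟩ : Fin n) : ℕ) else n

/-- the position of `i` in the increasing enumeration of `s` (`n` if `i ∉ s`) -/
noncomputable def idx (s : Finset (Fin n)) (i : Fin n) : ℕ :=
  if hi : i ∈ s then (((s.orderIsoOfFin rfl).symm ⟨i, hi⟩ : Fin s.card) : ℕ) else n

variable {s : Finset (Fin n)} {x y : ℕ} {i : Fin n}

lemma enum_lt (hx : x < s.card) : enum s x < n := by
  unfold enum; rw [dif_pos hx]; exact ((s.orderIsoOfFin rfl ⟨x, hx⟩ : Fin n)).isLt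

lemma enum_mem (hx : x < s.card) : (⟨enum s x, enum_lt hx⟩ : Fin n) ∈ s := by
  have h : (⟨enum s x, enum_lt hx⟩ : Fin n) = ((s.orderIsoOfFin rfl ⟨x, hx⟩ : Fin n)) := by
    apply Fin.ext; exact dif_pos hx
  rw [h]; exact (s.orderIsoOfFin rfl ⟨x, hx⟩).2

lemma enum_strictMono (hxy : x < y) (hy : y < s.card) : enum s x < enum s y := by
  unfold enum; rw [dif_pos hy, dif_pos (hxy.trans hy)]
  have := (s.orderIsoOfFin rfl).strictMono
    (show (⟨x, hxy.trans hy⟩ : Fin s.card) < ⟨y, hy⟩ from hxy)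
  exact this

lemma enum_mono (hxy : x ≤ y) (hy : y < s.card) : enum s x ≤ enum s y := by
  rcases eq_or_lt_of_le hxy with h|h
  · rw [h]
  · exact (enum_strictMono h hy).le

lemma enum_inj (hx : x < s.card) (hy : y < s.card) (h : enum s x = enum s y) : x = y := by
  rcases lt_trichotomy x y with h'|h'|h'
  · exact absurd h (enum_strictMono h' hy).ne
  · exact h'
  · exact absurd h.symm (enum_strictMono h' hx).ne

lemma idx_lt (hi : i ∈ s) : idx s i < s.card := by
  unfold idx; rw [dif_pos hi]; exact (((s.orderIsoOfFin rfl).symm ⟨i, hi⟩ : Fin s.card)).isLt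

lemma enum_idx (hi : i ∈ s) : enum s (idx s i) = (i : ℕ) := by
  unfold idx
  rw [dif_pos hi]
  unfold enum
  rw [dif_pos ((((s.orderIsoOfFin rfl)).symm ⟨i, hi⟩ : Fin s.card)).isLt]
  have h : (⟨(((s.orderIsoOfFin rfl).symm ⟨i, hi⟩ : Fin s.card) : ℕ),
      ((((s.orderIsoOfFin rfl)).symm ⟨i, hi⟩ : Fin s.card)).isLt⟩ : Fin s.card) =
      (s.orderIsoOfFin rfl).symm ⟨i, hi⟩ := Fin.eta _ _
  rw [h, OrderIso.apply_symm_apply]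

lemma idx_enum (hx : x < s.card) : idx s ⟨enum s x, enum_lt hx⟩ = x := by
  apply enum_inj (idx_lt (enum_mem hx)) hx
  rw [enum_idx (enum_mem hx)]

lemma enum_surj (hi : i ∈ s) : ∃ x, ∃ hx : x < s.card, enum s x = (i : ℕ) :=
  ⟨idx s i, idx_lt hi, enum_idx hi⟩

end Enum

section Skel

variable (b : ℕ → ℕ) (γ : Equiv.Perm (Fin j)) (π : Equiv.Perm (Fin n))

/-- columns whose 1 lies in the supported subdiagram -/
noncomputable def Scols : Finset (Fin n) :=
  Finset.univ.filter fun i => (i : ℕ) < b1 b γ π ((π i : ℕ))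

noncomputable def mm : ℕ := (Scols b γ π).card

noncomputable def Trows : Finset (Fin n) := (Scols b γ π).image π

variable {b γ π}

lemma mem_Scols {i : Fin n} : i ∈ Scols b γ π ↔ (i : ℕ) < b1 b γ π ((π i : ℕ)) := by
  simp [Scols]

lemma Trows_card : (Trows b γ π).card = mm b γ π :=
  Finset.card_image_of_injective _ π.injective

lemma mem_Trows {i : Fin n} : π i ∈ Trows b γ π ↔ i ∈ Scols b γ π := by
  constructor
  · intro h
    obtain ⟨a, ha, hai⟩ := Finset.mem_image.mp h
    rwa [π.injective hai] at ha
  · intro h; exact Finset.mem_image_of_mem π h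

variable (b γ π)

noncomputable def colN : ℕ → ℕ := enum (Scols b γ π)

noncomputable def rowN : ℕ → ℕ := enum (Trows b γ π)

noncomputable def p2N (x : ℕ) : ℕ :=
  if hx : x < mm b γ π then idx (Trows b γ π) (π ⟨colN b γ π x, enum_lt hx⟩) else x

noncomputable def b2N (r : ℕ) : ℕ :=
  ((Finset.range (mm b γ π)).filter fun x => colN b γ π x < b1 b γ π (rowN b γ π r)).card

variable {b γ π}

lemma colN_lt {x : ℕ} (hx : x < mm b γ π) : colN b γ π x < n := enum_lt hx

lemma colFin_mem {x : ℕ} (hx : x < mm b γ π) :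
    (⟨colN b γ π x, colN_lt hx⟩ : Fin n) ∈ Scols b γ π := enum_mem hx

lemma rowN_lt {x : ℕ} (hx : x < (Trows b γ π).card) : rowN b γ π x < n := enum_lt hx

lemma p2N_lt {x : ℕ} (hx : x < mm b γ π) : p2N b γ π x < mm b γ π := by
  rw [p2N, dif_pos hx, ← Trows_card]
  exact idx_lt (mem_Trows.mpr (colFin_mem hx))

lemma p2N_id {x : ℕ} (hx : ¬ x < mm b γ π) : p2N b γ π x = x := by rw [p2N, dif_neg hx]

lemma rowN_p2N {x : ℕ} (hx : x < mm b γ π) :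
    rowN b γ π (p2N b γ π x) = ((π ⟨colN b γ π x, colN_lt hx⟩ : Fin n) : ℕ) := by
  rw [p2N, dif_pos hx, rowN]
  exact enum_idx (mem_Trows.mpr (colFin_mem hx))

lemma p2N_inj {x y : ℕ} (hx : x < mm b γ π) (hy : y < mm b γ π)
    (h : p2N b γ π x = p2N b γ π y) : x = y := by
  have h2 : rowN b γ π (p2N b γ π x) = rowN b γ π (p2N b γ π y) := by rw [h]
  rw [rowN_p2N hx, rowN_p2N hy] at h2
  have h3 : (⟨colN b γ π x, colN_lt hx⟩ : Fin n) = ⟨colN b γ π y, colN_lt hy⟩ :=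
    π.injective (Fin.ext h2)
  exact enum_inj hx hy (congrArg Fin.val h3)

lemma lt_b2N {x r : ℕ} : x < b2N b γ π r ↔
    x < mm b γ π ∧ colN b γ π x < b1 b γ π (rowN b γ π r) := by
  rw [b2N]
  rw [← mem_iff_lt_card _ (fun u v huv hv => ?_)]
  · simp [Finset.mem_filter]
  · simp only [Finset.mem_filter, Finset.mem_range] at hv ⊢
    exact ⟨lt_of_le_of_lt huv hv.1, lt_of_le_of_lt (enum_mono huv hv.1) hv.2⟩

lemma b2N_le (r : ℕ) : b2N b γ π r ≤ mm b γ π :=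
  (Finset.card_filter_le _ _).trans (Finset.card_range _).le

lemma p2N_trans {x : ℕ} (hx : x < mm b γ π) : x < b2N b γ π (p2N b γ π x) := by
  rw [lt_b2N, rowN_p2N hx]
  exact ⟨hx, mem_Scols.mp (colFin_mem hx)⟩

end Skel

section ToPerm

/-- interpret the first `M` values of `p : ℕ → ℕ` as a permutation of `Fin M` -/
noncomputable def toPerm (M : ℕ) (p : ℕ → ℕ) : Equiv.Perm (Fin M) :=
  if h : (∀ x, x < M → p x < M) ∧ (∀ x y, x < M → y < M → p x = p y → x = y) then
    Equiv.ofBijective (fun c : Fin M => ⟨p c, h.1 c c.2⟩)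
      (Finite.injective_iff_bijective.mp fun a c hac =>
        Fin.ext (h.2 a c a.2 c.2 (congrArg Fin.val hac)))
  else 1

lemma toPerm_val {M : ℕ} {p : ℕ → ℕ}
    (h : (∀ x, x < M → p x < M) ∧ (∀ x y, x < M → y < M → p x = p y → x = y)) (c : Fin M) :
    ((toPerm M p c : Fin M) : ℕ) = p c := by
  rw [toPerm, dif_pos h]; rfl

lemma toPerm_eq {M : ℕ} {p : ℕ → ℕ} {τ : Equiv.Perm (Fin M)}
    (hpτ : ∀ c : Fin M, p c = (τ c : ℕ)) : toPerm M p = τ := by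
  have hgood : (∀ x, x < M → p x < M) ∧ (∀ x y, x < M → y < M → p x = p y → x = y) := by
    constructor
    · intro x hx; rw [hpτ ⟨x, hx⟩]; exact (τ ⟨x, hx⟩).isLt
    · intro x y hx hy hxy
      rw [hpτ ⟨x, hx⟩, hpτ ⟨y, hy⟩] at hxy
      have := τ.injective (Fin.ext hxy)
      exact congrArg Fin.val this
  apply Equiv.ext
  intro c
  apply Fin.ext
  rw [toPerm_val hgood, hpτ]

lemma toPerm_p2N_val {b : ℕ → ℕ} {γ : Equiv.Perm (Fin j)} {π : Equiv.Perm (Fin n)}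
    (c : Fin (mm b γ π)) : ((toPerm (mm b γ π) (p2N b γ π) c : Fin _) : ℕ) = p2N b γ π c :=
  toPerm_val ⟨fun x hx => p2N_lt hx, fun x y hx hy => p2N_inj hx hy⟩ c

lemma toPerm_p2N_transversal {b : ℕ → ℕ} {γ : Equiv.Perm (Fin j)} {π : Equiv.Perm (Fin n)} :
    IsTransversal (mm b γ π) (b2N b γ π) (toPerm (mm b γ π) (p2N b γ π)) := by
  intro c
  rw [toPerm_p2N_val]
  exact p2N_trans c.2

end ToPerm

section Replace

variable (b : ℕ → ℕ) (γ : Equiv.Perm (Fin j)) (π : Equiv.Perm (Fin n)) (q : ℕ → ℕ)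

def Good : Prop :=
  (∀ x, x < mm b γ π → q x < mm b γ π) ∧
  (∀ x y, x < mm b γ π → y < mm b γ π → q x = q y → x = y)

noncomputable def rf (i : Fin n) : Fin n :=
  if hi : i ∈ Scols b γ π then
    (if hq : q (idx (Scols b γ π) i) < (Trows b γ π).card then
      ⟨enum (Trows b γ π) (q (idx (Scols b γ π) i)), enum_lt hq⟩ else π i)
  else π i

variable {b γ π q}

lemma rf_injective (hg : Good b γ π q) : Function.Injective (rf b γ π q) := by
  have key : ∀ i : Fin n, i ∈ Scols b γ π →
      ∃ hq : q (idx (Scols b γ π) i) < (Trows b γ π).card,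
        rf b γ π q i = ⟨enum (Trows b γ π) (q (idx (Scols b γ π) i)), enum_lt hq⟩ := by
    intro i hi
    have h1 : idx (Scols b γ π) i < mm b γ π := idx_lt hi
    have h2 : q (idx (Scols b γ π) i) < (Trows b γ π).card := by
      rw [Trows_card]; exact hg.1 _ h1
    exact ⟨h2, by rw [rf, dif_pos hi, dif_pos h2]⟩
  intro i1 i2 heq
  by_cases h1 : i1 ∈ Scols b γ π <;> by_cases h2 : i2 ∈ Scols b γ π
  · obtain ⟨hq1, he1⟩ := key i1 h1
    obtain ⟨hq2, he2⟩ := key i2 h2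
    rw [he1, he2] at heq
    have hv : enum (Trows b γ π) (q (idx (Scols b γ π) i1)) =
        enum (Trows b γ π) (q (idx (Scols b γ π) i2)) := congrArg Fin.val heq
    have h3 := enum_inj hq1 hq2 hv
    have h4 := hg.2 _ _ (idx_lt h1) (idx_lt h2) h3
    have h5 : (i1 : ℕ) = (i2 : ℕ) := by
      rw [← enum_idx h1, ← enum_idx h2, h4]
    exact Fin.ext h5
  · obtain ⟨hq1, he1⟩ := key i1 h1
    exfalso
    have hmem : rf b γ π q i1 ∈ Trows b γ π := by rw [he1]; exact enum_mem hq1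
    rw [heq, rf, dif_neg h2] at hmem
    exact h2 (mem_Trows.mp hmem)
  · obtain ⟨hq2, he2⟩ := key i2 h2
    exfalso
    have hmem : rf b γ π q i2 ∈ Trows b γ π := by rw [he2]; exact enum_mem hq2
    rw [← heq, rf, dif_neg h1] at hmem
    exact h1 (mem_Trows.mp hmem)
  · rw [rf, dif_neg h1, rf, dif_neg h2] at heq
    exact π.injective heq

variable (b γ π q)

noncomputable def replace : Equiv.Perm (Fin n) :=
  if hg : Good b γ π q then
    Equiv.ofBijective (rf b γ π q) (Finite.injective_iff_bijective.mp (rf_injective hg))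
  else π

variable {b γ π q}

lemma replace_off {i : Fin n} (hi : i ∉ Scols b γ π) : replace b γ π q i = π i := by
  rw [replace]
  split
  · show rf b γ π q i = π i
    rw [rf, dif_neg hi]
  · rfl

lemma replace_on (hg : Good b γ π q) {x : ℕ} (hx : x < mm b γ π) :
    ((replace b γ π q ⟨colN b γ π x, colN_lt hx⟩ : Fin n) : ℕ) = rowN b γ π (q x) := by
  rw [replace, dif_pos hg]
  show ((rf b γ π q ⟨colN b γ π x, colN_lt hx⟩ : Fin n) : ℕ) = _
  have hmem := colFin_mem hx
  have hidx : idx (Scols b γ π) ⟨colN b γ π x, colN_lt hx⟩ = x := idx_enum hx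
  have hq : q (idx (Scols b γ π) ⟨colN b γ π x, colN_lt hx⟩) < (Trows b γ π).card := by
    rw [hidx, Trows_card]; exact hg.1 x hx
  rw [rf, dif_pos hmem, dif_pos hq]
  show enum (Trows b γ π) (q (idx (Scols b γ π) ⟨colN b γ π x, colN_lt hx⟩)) = _
  rw [hidx]
  rfl

lemma replace_unique (hg : Good b γ π q) (π' : Equiv.Perm (Fin n))
    (hoff : ∀ i ∉ Scols b γ π, π' i = π i)
    (hon : ∀ x (hx : x < mm b γ π),
      ((π' ⟨colN b γ π x, colN_lt hx⟩ : Fin n) : ℕ) = rowN b γ π (q x)) :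
    π' = replace b γ π q := by
  apply Equiv.ext
  intro i
  by_cases hi : i ∈ Scols b γ π
  · obtain ⟨x, hx, he⟩ := enum_surj hi
    have hie : i = ⟨colN b γ π x, colN_lt hx⟩ := Fin.ext he.symm
    rw [hie]
    exact Fin.ext ((hon x hx).trans (replace_on hg hx).symm)
  · rw [hoff i hi, replace_off hi]

end Replace


section Invariance

variable {b : ℕ → ℕ} {γ : Equiv.Perm (Fin j)}

lemma supp_reduce (hj : 0 < j) (π : Equiv.Perm (Fin n)) (S : Finset (Fin n))
    (HS : ∀ s ∈ S, Supp b γ π (s : ℕ) ((π s : ℕ)))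
    {x y : ℕ} (h : Supp b γ π x y) :
    ∃ g : Fin j ↪o Fin n, SuppWit b γ π x y g ∧ ∀ e, g e ∉ S := by
  obtain ⟨g0, hg0⟩ := h
  have key : ∀ d (g : Fin j ↪o Fin n), SuppWit b γ π x y g → n - (g ⟨0, hj⟩ : ℕ) ≤ d →
      ∃ g' : Fin j ↪o Fin n, SuppWit b γ π x y g' ∧ ∀ e, g' e ∉ S := by
    intro d
    induction d with
    | zero =>
      intro g hgw hd
      exfalso
      have := (g ⟨0, hj⟩).isLt
      omega
    | succ d ih =>
      intro g hgw hd
      by_cases hfree : ∀ e, g e ∉ S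
      · exact ⟨g, hgw, hfree⟩
      · push_neg at hfree
        obtain ⟨a, ha⟩ := hfree
        obtain ⟨g', w1, w2, w3, w4, w5⟩ := HS (g a) ha
        obtain ⟨v1, v2, v3, v4, v5⟩ := hgw
        have hg'w : SuppWit b γ π x y g' :=
          ⟨w1, fun e => (v2 a).trans (w2 e), fun e => (w3 e).trans (v3 a), w4,
            fun c => (v2 a).trans (w5 c)⟩
        apply ih g' hg'w
        have h1 : (g ⟨0, hj⟩ : ℕ) ≤ (g a : ℕ) := g.monotone (Fin.mk_le_of_le_val (Nat.zero_le _))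
        have h2 : (g a : ℕ) < (g' ⟨0, hj⟩ : ℕ) := w2 ⟨0, hj⟩
        omega
  exact key (n - (g0 ⟨0, hj⟩ : ℕ)) g0 hg0 le_rfl

lemma supp_transfer {π π' : Equiv.Perm (Fin n)} {S : Finset (Fin n)}
    (hagree : ∀ i ∉ S, π' i = π i) {x y : ℕ} {g : Fin j ↪o Fin n} (hfree : ∀ e, g e ∉ S)
    (hw : SuppWit b γ π x y g) : Supp b γ π' x y := by
  have he : ∀ e, π' (g e) = π (g e) := fun e => hagree _ (hfree e)
  obtain ⟨v1, v2, v3, v4, v5⟩ := hw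
  refine ⟨g, fun a c => ?_, v2, fun a => ?_, fun a c => ?_, fun c => ?_⟩
  · rw [he a, he c]; exact v1 a c
  · rw [he a]; exact v3 a
  · rw [he c]; exact v4 a c
  · rw [he c]; exact v5 c

variable {π : Equiv.Perm (Fin n)} {q : ℕ → ℕ}

lemma supp_replace (hj : 0 < j) (hgood : Good b γ π q)
    (hq3 : ∀ x, x < mm b γ π → x < b2N b γ π (q x)) (x y : ℕ) :
    Supp b γ (replace b γ π q) x y ↔ Supp b γ π x y := by
  have HSπ : ∀ s ∈ Scols b γ π, Supp b γ π (s : ℕ) ((π s : ℕ)) :=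
    fun s hs => (lt_b1.mp (mem_Scols.mp hs)).2
  have hoff : ∀ i ∉ Scols b γ π, replace b γ π q i = π i := fun i hi => replace_off hi
  have fwd : ∀ x y, Supp b γ π x y → Supp b γ (replace b γ π q) x y := by
    intro x y hxy
    obtain ⟨g, hw, hfree⟩ := supp_reduce hj π (Scols b γ π) HSπ hxy
    exact supp_transfer hoff hfree hw
  have HSπ' : ∀ s ∈ Scols b γ π,
      Supp b γ (replace b γ π q) (s : ℕ) ((replace b γ π q s : ℕ)) := by
    intro s hs
    obtain ⟨x, hx, he⟩ := enum_surj hs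
    have hse : s = ⟨colN b γ π x, colN_lt hx⟩ := Fin.ext he.symm
    have hv : ((replace b γ π q ⟨colN b γ π x, colN_lt hx⟩ : Fin n) : ℕ) = rowN b γ π (q x) :=
      replace_on hgood hx
    rw [hse, hv]
    apply fwd
    have h2 := lt_b2N.mp (hq3 x hx)
    exact (lt_b1.mp h2.2).2
  have bwd : ∀ x y, Supp b γ (replace b γ π q) x y → Supp b γ π x y := by
    intro x y hxy
    obtain ⟨g, hw, hfree⟩ := supp_reduce hj (replace b γ π q) (Scols b γ π) HSπ' hxy
    exact supp_transfer (fun i hi => (hoff i hi).symm) hfree hw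
  exact ⟨bwd x y, fwd x y⟩

lemma b1_replace (hj : 0 < j) (hgood : Good b γ π q)
    (hq3 : ∀ x, x < mm b γ π → x < b2N b γ π (q x)) :
    b1 b γ (replace b γ π q) = b1 b γ π :=
  funext fun y => nat_eq_of_lt_iff fun x => by
    rw [lt_b1, lt_b1, supp_replace hj hgood hq3]

lemma Scols_replace (hj : 0 < j) (hgood : Good b γ π q)
    (hq3 : ∀ x, x < mm b γ π → x < b2N b γ π (q x)) :
    Scols b γ (replace b γ π q) = Scols b γ π := by
  ext i
  rw [mem_Scols, mem_Scols, b1_replace hj hgood hq3]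
  by_cases hi : i ∈ Scols b γ π
  · obtain ⟨x, hx, he⟩ := enum_surj hi
    have hse : i = ⟨colN b γ π x, colN_lt hx⟩ := Fin.ext he.symm
    have hv : ((replace b γ π q i : Fin n) : ℕ) = rowN b γ π (q x) := by
      rw [hse]; exact replace_on hgood hx
    have h1 : (i : ℕ) < b1 b γ π ((replace b γ π q i : Fin n) : ℕ) := by
      rw [hv, hse]
      exact (lt_b2N.mp (hq3 x hx)).2
    exact iff_of_true h1 (mem_Scols.mp hi)
  · rw [replace_off hi]

lemma mm_replace (hj : 0 < j) (hgood : Good b γ π q)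
    (hq3 : ∀ x, x < mm b γ π → x < b2N b γ π (q x)) :
    mm b γ (replace b γ π q) = mm b γ π := by
  unfold mm; rw [Scols_replace hj hgood hq3]

lemma colN_replace (hj : 0 < j) (hgood : Good b γ π q)
    (hq3 : ∀ x, x < mm b γ π → x < b2N b γ π (q x)) :
    colN b γ (replace b γ π q) = colN b γ π := by
  unfold colN; rw [Scols_replace hj hgood hq3]

lemma Trows_replace (hj : 0 < j) (hgood : Good b γ π q)
    (hq3 : ∀ x, x < mm b γ π → x < b2N b γ π (q x)) :
    Trows b γ (replace b γ π q) = Trows b γ π := by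
  apply Finset.eq_of_subset_of_card_le
  · intro t ht
    obtain ⟨i, hi, he⟩ := Finset.mem_image.mp ht
    rw [Scols_replace hj hgood hq3] at hi
    obtain ⟨x, hx, hex⟩ := enum_surj hi
    have hse : i = ⟨colN b γ π x, colN_lt hx⟩ := Fin.ext hex.symm
    have hv : (t : ℕ) = rowN b γ π (q x) := by
      rw [← he, hse]; exact replace_on hgood hx
    have hqx : q x < (Trows b γ π).card := by
      rw [Trows_card]; exact hgood.1 x hx
    have : t = ⟨rowN b γ π (q x), rowN_lt hqx⟩ := Fin.ext hv
    rw [this]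
    exact enum_mem hqx
  · apply le_of_eq
    rw [Trows_card, Trows_card, mm_replace hj hgood hq3]

lemma rowN_replace (hj : 0 < j) (hgood : Good b γ π q)
    (hq3 : ∀ x, x < mm b γ π → x < b2N b γ π (q x)) :
    rowN b γ (replace b γ π q) = rowN b γ π := by
  unfold rowN; rw [Trows_replace hj hgood hq3]

lemma b2N_replace (hj : 0 < j) (hgood : Good b γ π q)
    (hq3 : ∀ x, x < mm b γ π → x < b2N b γ π (q x)) :
    b2N b γ (replace b γ π q) = b2N b γ π := by
  funext r
  unfold b2N
  rw [mm_replace hj hgood hq3, colN_replace hj hgood hq3, rowN_replace hj hgood hq3,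
    b1_replace hj hgood hq3]

lemma p2N_replace (hj : 0 < j) (hgood : Good b γ π q)
    (hq3 : ∀ x, x < mm b γ π → x < b2N b γ π (q x)) :
    p2N b γ (replace b γ π q) = fun x => if x < mm b γ π then q x else x := by
  funext x
  by_cases hx : x < mm b γ π
  · rw [if_pos hx]
    have hx' : x < mm b γ (replace b γ π q) := by rw [mm_replace hj hgood hq3]; exact hx
    have h1 := rowN_p2N hx'
    have h2 : (⟨colN b γ (replace b γ π q) x, colN_lt hx'⟩ : Fin n) =
        ⟨colN b γ π x, colN_lt hx⟩ := Fin.ext (show colN b γ (replace b γ π q) x = colN b γ π x by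
      rw [colN_replace hj hgood hq3])
    rw [h2, replace_on hgood hx, rowN_replace hj hgood hq3] at h1
    have hT : (Trows b γ π).card = mm b γ π := Trows_card
    apply enum_inj (s := Trows b γ π) (by rw [hT]; exact mm_replace hj hgood hq3 ▸ p2N_lt hx')
      (by rw [hT]; exact hgood.1 x hx)
    exact h1
  · rw [if_neg hx]
    exact p2N_id (by rw [mm_replace hj hgood hq3]; exact hx)

lemma replace_transversal (hπ : IsTransversal n b π) (hgood : Good b γ π q)
    (hq3 : ∀ x, x < mm b γ π → x < b2N b γ π (q x)) :
    IsTransversal n b (replace b γ π q) := by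
  intro i
  by_cases hi : i ∈ Scols b γ π
  · obtain ⟨x, hx, he⟩ := enum_surj hi
    have hse : i = ⟨colN b γ π x, colN_lt hx⟩ := Fin.ext he.symm
    have hv : ((replace b γ π q i : Fin n) : ℕ) = rowN b γ π (q x) := by
      rw [hse]; exact replace_on hgood hx
    rw [hv, hse]
    calc colN b γ π x < b1 b γ π (rowN b γ π (q x)) := (lt_b2N.mp (hq3 x hx)).2
    _ ≤ b (rowN b γ π (q x)) := b1_le _
  · rw [replace_off hi]
    exact hπ i

end Invariance

section Young

variable {b : ℕ → ℕ} {γ : Equiv.Perm (Fin j)}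

lemma transversal_staircase {M : ℕ} {B : ℕ → ℕ}
    (hmono : ∀ i j, i ≤ j → j < M → B i ≤ B j)
    {τ : Equiv.Perm (Fin M)} (ht : IsTransversal M B τ) : ∀ r, r < M → r < B r := by
  intro r hr
  set t : Finset (Fin M) := (Finset.univ.filter (fun y : Fin M => (y : ℕ) ≤ r)).image τ.symm
    with htdef
  have hfil : (Finset.univ.filter (fun y : Fin M => (y : ℕ) ≤ r)) = Finset.Iic ⟨r, hr⟩ := by
    ext y; simp [Fin.le_def]
  have hcard : t.card = r + 1 := by
    rw [htdef, Finset.card_image_of_injective _ τ.symm.injective, hfil, Fin.card_Iic]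
  have hex : ∃ c ∈ t, r ≤ (c : ℕ) := by
    by_contra hc
    push_neg at hc
    have hsub : t ⊆ Finset.Iio ⟨r, hr⟩ := by
      intro c hct
      rw [Finset.mem_Iio]
      exact hc c hct
    have := Finset.card_le_card hsub
    rw [hcard, Fin.card_Iio] at this
    have h2 : ((⟨r, hr⟩ : Fin M) : ℕ) = r := rfl
    rw [h2] at this
    omega
  obtain ⟨c, hct, hrc⟩ := hex
  obtain ⟨y, hy, hyc⟩ := Finset.mem_image.mp hct
  simp only [Finset.mem_filter] at hy
  have hτc : τ c = y := by rw [← hyc, Equiv.apply_symm_apply]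
  have h1 := ht c
  rw [hτc] at h1
  calc r ≤ (c : ℕ) := hrc
  _ < B (y : ℕ) := h1
  _ ≤ B r := hmono _ _ hy.2 hr

lemma b2N_mono {π : Equiv.Perm (Fin n)} (hY : IsYoungShape n b) :
    ∀ r r', r ≤ r' → r' < mm b γ π → b2N b γ π r ≤ b2N b γ π r' := by
  intro r r' hrr' hr'
  have hr'' : r' < (Trows b γ π).card := by rw [Trows_card]; exact hr'
  apply Finset.card_le_card
  intro z hz
  simp only [Finset.mem_filter, Finset.mem_range] at hz ⊢
  exact ⟨hz.1, lt_of_lt_of_le hz.2 (b1_mono hY (enum_mono hrr' hr'') (rowN_lt hr''))⟩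

lemma young_b2N {π : Equiv.Perm (Fin n)} (hY : IsYoungShape n b) :
    IsYoungShape (mm b γ π) (b2N b γ π) := by
  refine ⟨b2N_mono hY, fun r hr => ⟨?_, b2N_le r⟩⟩
  exact transversal_staircase (b2N_mono hY) toPerm_p2N_transversal r hr

end Young

section Enum2

variable {s : Finset (Fin n)} {x y : ℕ} {i i' : Fin n}

lemma enum_lt_enum (hx : x < s.card) (hy : y < s.card) : enum s x < enum s y ↔ x < y := by
  constructor
  · intro h
    rcases lt_trichotomy x y with h'|h'|h'
    · exact h'
    · exact absurd h (by rw [h']; exact lt_irrefl _)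
    · exact absurd (enum_strictMono h' hx) (by omega)
  · intro h
    exact enum_strictMono h hy

lemma idx_lt_idx (hi : i ∈ s) (hi' : i' ∈ s) : idx s i < idx s i' ↔ (i : ℕ) < (i' : ℕ) := by
  have h := enum_lt_enum (idx_lt hi) (idx_lt hi')
  rw [enum_idx hi, enum_idx hi'] at h
  exact h.symm

end Enum2

section BlockSum

variable {δ : Equiv.Perm (Fin k)} {γ : Equiv.Perm (Fin j)}

lemma blockSum_lt_AA {a c : Fin (k + j)} (ha : (a : ℕ) < k) (hc : (c : ℕ) < k) :
    blockSum ⇑δ ⇑γ a < blockSum ⇑δ ⇑γ c ↔ δ ⟨a, ha⟩ < δ ⟨c, hc⟩ := by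
  unfold blockSum
  rw [dif_pos ha, dif_pos hc]
  simp only [Fin.lt_def, Fin.coe_addNat]
  omega

lemma blockSum_lt_AC {a c : Fin (k + j)} (ha : (a : ℕ) < k) (hc : ¬ (c : ℕ) < k) :
    ¬ blockSum ⇑δ ⇑γ a < blockSum ⇑δ ⇑γ c := by
  unfold blockSum
  rw [dif_pos ha, dif_neg hc]
  simp only [Fin.lt_def, Fin.coe_addNat, Fin.coe_castLE]
  have := (γ ⟨(c : ℕ) - k, by have := c.isLt; omega⟩).isLt
  omega

lemma blockSum_lt_CA {a c : Fin (k + j)} (ha : ¬ (a : ℕ) < k) (hc : (c : ℕ) < k) :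
    blockSum ⇑δ ⇑γ a < blockSum ⇑δ ⇑γ c := by
  unfold blockSum
  rw [dif_neg ha, dif_pos hc]
  simp only [Fin.lt_def, Fin.coe_addNat, Fin.coe_castLE]
  have := (γ ⟨(a : ℕ) - k, by have := a.isLt; omega⟩).isLt
  omega

lemma blockSum_lt_CC {a c : Fin (k + j)} (ha : ¬ (a : ℕ) < k) (hc : ¬ (c : ℕ) < k) :
    blockSum ⇑δ ⇑γ a < blockSum ⇑δ ⇑γ c ↔
      γ ⟨(a : ℕ) - k, by have := a.isLt; omega⟩ < γ ⟨(c : ℕ) - k, by have := c.isLt; omega⟩ := by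
  unfold blockSum
  rw [dif_neg ha, dif_neg hc]
  simp only [Fin.lt_def, Fin.coe_castLE]

end BlockSum

section L1

variable {b : ℕ → ℕ} {γ : Equiv.Perm (Fin j)} {δ : Equiv.Perm (Fin k)} {π : Equiv.Perm (Fin n)}

lemma contains_mpr (hk : 0 < k) (hj : 0 < j) (hY : IsYoungShape n b)
    (h : ShapeContains (mm b γ π) (b2N b γ π) ⇑(toPerm (mm b γ π) (p2N b γ π)) ⇑δ) :
    ShapeContains n b ⇑π (blockSum ⇑δ ⇑γ) := by
  obtain ⟨f, hpat2, hcross2⟩ := h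
  -- the columns of the copy of δ, in `Fin n`
  have hfm : ∀ a : Fin k, ((f a : Fin (mm b γ π)) : ℕ) < mm b γ π := fun a => (f a).2
  set colF : Fin k → Fin n := fun a => ⟨colN b γ π (f a), colN_lt (hfm a)⟩ with hcolF
  -- row values
  have hrow : ∀ c : Fin k, rowN b γ π (p2N b γ π (f c)) = ((π (colF c) : Fin n) : ℕ) :=
    fun c => rowN_p2N (hfm c)
  have hp2v : ∀ c : Fin k,
      ((toPerm (mm b γ π) (p2N b γ π) (f c) : Fin (mm b γ π)) : ℕ) = p2N b γ π (f c) :=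
    fun c => toPerm_p2N_val (f c)
  -- supported crossing cells
  have hcells : ∀ a c : Fin k,
      colN b γ π (f a) < b1 b γ π ((π (colF c) : Fin n) : ℕ) := by
    intro a c
    have h1 := (lt_b2N.mp (hcross2 a c)).2
    rw [hp2v c, hrow c] at h1
    exact h1
  -- pattern at the level of π
  have hpatπ : ∀ a c : Fin k, δ a < δ c ↔ (π (colF a) : ℕ) < (π (colF c) : ℕ) := by
    intro a c
    rw [hpat2 a c, Fin.lt_def, hp2v a, hp2v c,
      ← hrow a, ← hrow c]
    exact (enum_lt_enum (by rw [Trows_card]; exact p2N_lt (hfm a))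
      (by rw [Trows_card]; exact p2N_lt (hfm c))).symm
  -- the rightmost column and lowest row of the copy
  have ha0 : k - 1 < k := by omega
  set a0 : Fin k := ⟨k - 1, ha0⟩ with ha0def
  have hall : ∀ a : Fin k, colN b γ π (f a) ≤ colN b γ π (f a0) := by
    intro a
    apply enum_mono _ (hfm a0)
    exact f.monotone (by rw [Fin.le_def]; show (a : ℕ) ≤ k - 1; omega)
  obtain ⟨c0, -, hc0⟩ := Finset.exists_min_image Finset.univ
    (fun c : Fin k => ((π (colF c) : Fin n) : ℕ)) ⟨⟨0, hk⟩, Finset.mem_univ _⟩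
  have hc0' : ∀ c : Fin k, ((π (colF c0) : Fin n) : ℕ) ≤ ((π (colF c) : Fin n) : ℕ) :=
    fun c => hc0 c (Finset.mem_univ c)
  -- the supporting copy of γ
  obtain ⟨g, g1, g2, g3, g4, g5⟩ := (lt_b1.mp (hcells a0 c0)).2
  -- assemble the combined embedding
  set Ffun : Fin (k + j) → Fin n := fun i =>
    if h : (i : ℕ) < k then colF ⟨(i : ℕ), h⟩
    else g ⟨(i : ℕ) - k, by have := i.isLt; omega⟩ with hFfun
  have hFA : ∀ (i : Fin (k + j)) (h : (i : ℕ) < k), Ffun i = colF ⟨(i : ℕ), h⟩ :=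
    fun i h => dif_pos h
  have hFC : ∀ (i : Fin (k + j)) (h : ¬ (i : ℕ) < k),
      Ffun i = g ⟨(i : ℕ) - k, by have := i.isLt; omega⟩ := fun i h => dif_neg h
  have hsm : StrictMono Ffun := by
    intro i i' hii'
    have hv : (i : ℕ) < (i' : ℕ) := hii'
    by_cases h1 : (i : ℕ) < k <;> by_cases h2 : (i' : ℕ) < k
    · rw [hFA i h1, hFA i' h2]
      show colN b γ π (f ⟨(i : ℕ), h1⟩) < colN b γ π (f ⟨(i' : ℕ), h2⟩)
      exact enum_strictMono (f.strictMono (show (⟨(i : ℕ), h1⟩ : Fin k) < ⟨(i' : ℕ), h2⟩ from hv))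
        (hfm _)
    · rw [hFA i h1, hFC i' h2]
      show colN b γ π (f ⟨(i : ℕ), h1⟩) < _
      calc colN b γ π (f ⟨(i : ℕ), h1⟩) ≤ colN b γ π (f a0) := hall _
      _ < _ := g2 _
    · omega
    · rw [hFC i h1, hFC i' h2]
      exact g.strictMono (show ((⟨(i : ℕ) - k, _⟩ : Fin j)) < ⟨(i' : ℕ) - k, _⟩ by
        rw [Fin.lt_def]; simp only; omega)
  refine ⟨OrderEmbedding.ofStrictMono Ffun hsm, ?_, ?_⟩
  · intro A C
    show blockSum ⇑δ ⇑γ A < blockSum ⇑δ ⇑γ C ↔ π (Ffun A) < π (Ffun C)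
    by_cases h1 : (A : ℕ) < k <;> by_cases h2 : (C : ℕ) < k
    · rw [hFA A h1, hFA C h2, blockSum_lt_AA h1 h2, Fin.lt_def]
      exact hpatπ _ _
    · rw [hFA A h1, hFC C h2]
      refine iff_of_false (blockSum_lt_AC h1 h2) ?_
      rw [Fin.lt_def]
      have := g3 ⟨(C : ℕ) - k, by have := C.isLt; omega⟩
      have h4 := hc0' ⟨(A : ℕ), h1⟩
      omega
    · rw [hFC A h1, hFA C h2]
      refine iff_of_true (blockSum_lt_CA h1 h2) ?_
      rw [Fin.lt_def]
      have := g3 ⟨(A : ℕ) - k, by have := A.isLt; omega⟩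
      have h4 := hc0' ⟨(C : ℕ), h2⟩
      omega
    · rw [hFC A h1, hFC C h2, blockSum_lt_CC h1 h2]
      exact g1 _ _
  · intro A C
    show ((Ffun A : Fin n) : ℕ) < b ((π (Ffun C) : Fin n) : ℕ)
    have hbmono : ∀ e : Fin j, ∀ c : Fin k,
        b ((π (g e) : Fin n) : ℕ) ≤ b ((π (colF c) : Fin n) : ℕ) := by
      intro e c
      apply hY.1
      · have := g3 e
        have := hc0' c
        omega
      · exact (π (colF c)).isLt
    by_cases h1 : (A : ℕ) < k <;> by_cases h2 : (C : ℕ) < k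
    · rw [hFA A h1, hFA C h2]
      calc ((colF ⟨(A : ℕ), h1⟩ : Fin n) : ℕ) ≤ colN b γ π (f a0) := hall _
      _ < b ((π (g ⟨0, hj⟩) : Fin n) : ℕ) := g5 _
      _ ≤ _ := hbmono _ _
    · rw [hFA A h1, hFC C h2]
      calc ((colF ⟨(A : ℕ), h1⟩ : Fin n) : ℕ) ≤ colN b γ π (f a0) := hall _
      _ < _ := g5 _
    · rw [hFC A h1, hFA C h2]
      calc ((g ⟨(A : ℕ) - k, _⟩ : Fin n) : ℕ) < b ((π (g ⟨0, hj⟩) : Fin n) : ℕ) := g4 _ _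
      _ ≤ _ := hbmono _ _
    · rw [hFC A h1, hFC C h2]
      exact g4 _ _

lemma contains_mp (hk : 0 < k) (hj : 0 < j)
    (h : ShapeContains n b ⇑π (blockSum ⇑δ ⇑γ)) :
    ShapeContains (mm b γ π) (b2N b γ π) ⇑(toPerm (mm b γ π) (p2N b γ π)) ⇑δ := by
  obtain ⟨F, hpat, hcross⟩ := h
  set aF : Fin k → Fin (k + j) := fun a => ⟨(a : ℕ), by have := a.isLt; omega⟩ with haF
  set cF : Fin j → Fin (k + j) := fun e => ⟨k + (e : ℕ), by have := e.isLt; omega⟩ with hcF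
  have hcFval : ∀ e : Fin j, (⟨((cF e : Fin (k + j)) : ℕ) - k,
      by have := (cF e).isLt; omega⟩ : Fin j) = e := by
    intro e
    apply Fin.ext
    show k + (e : ℕ) - k = (e : ℕ)
    omega
  set g : Fin j ↪o Fin n := OrderEmbedding.ofStrictMono (fun e => F (cF e))
    (fun e e' hee' => F.strictMono (show cF e < cF e' by
      rw [Fin.lt_def]; show k + (e : ℕ) < k + (e' : ℕ); have : (e : ℕ) < (e' : ℕ) := hee'; omega))
    with hgdef
  have hgval : ∀ e : Fin j, g e = F (cF e) := fun e => rfl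
  have hg_pat : ∀ a c : Fin j, γ a < γ c ↔ π (g a) < π (g c) := by
    intro a c
    have h2 := hpat (cF a) (cF c)
    rw [blockSum_lt_CC (show ¬ ((cF a : Fin (k + j)) : ℕ) < k by show ¬ k + (a : ℕ) < k; omega)
      (show ¬ ((cF c : Fin (k + j)) : ℕ) < k by show ¬ k + (c : ℕ) < k; omega)] at h2
    rw [hcFval a, hcFval c] at h2
    exact h2
  have hAC_rows : ∀ (a : Fin k) (e : Fin j), ((π (F (cF e)) : Fin n) : ℕ) <
      ((π (F (aF a)) : Fin n) : ℕ) := by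
    intro a e
    have h1 : blockSum ⇑δ ⇑γ (cF e) < blockSum ⇑δ ⇑γ (aF a) :=
      blockSum_lt_CA (show ¬ ((cF e : Fin (k + j)) : ℕ) < k by show ¬ k + (e : ℕ) < k; omega)
        (show ((aF a : Fin (k + j)) : ℕ) < k from a.isLt)
    exact (hpat (cF e) (aF a)).mp h1
  have hcols : ∀ (a : Fin k) (e : Fin j), ((F (aF a) : Fin n) : ℕ) < ((F (cF e) : Fin n) : ℕ) := by
    intro a e
    apply F.strictMono
    rw [Fin.lt_def]
    show (a : ℕ) < k + (e : ℕ)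
    have := a.isLt
    omega
  have hsupp : ∀ a c : Fin k,
      SuppWit b γ π ((F (aF a) : Fin n) : ℕ) ((π (F (aF c)) : Fin n) : ℕ) g := by
    intro a c
    refine ⟨hg_pat, fun e => hcols a e, fun e => hAC_rows c e,
      fun e e' => ?_, fun e => ?_⟩
    · rw [hgval, hgval]; exact hcross (cF e) (cF e')
    · rw [hgval]; exact hcross (aF a) (cF e)
  have hmem : ∀ a : Fin k, F (aF a) ∈ Scols b γ π := by
    intro a
    rw [mem_Scols]
    exact lt_b1.mpr ⟨hcross (aF a) (aF a), ⟨g, hsupp a a⟩⟩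
  set f : Fin k → Fin (mm b γ π) := fun a => ⟨idx (Scols b γ π) (F (aF a)), idx_lt (hmem a)⟩
    with hfdef
  have hfsm : StrictMono f := by
    intro a c hac
    show idx (Scols b γ π) (F (aF a)) < idx (Scols b γ π) (F (aF c))
    rw [idx_lt_idx (hmem a) (hmem c)]
    apply F.strictMono
    rw [Fin.lt_def]
    exact hac
  have hcolN : ∀ a : Fin k, colN b γ π (f a) = ((F (aF a) : Fin n) : ℕ) :=
    fun a => enum_idx (hmem a)
  have hcolFin : ∀ a : Fin k, (⟨colN b γ π (f a), colN_lt (f a).2⟩ : Fin n) = F (aF a) :=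
    fun a => Fin.ext (hcolN a)
  have hrowval : ∀ a : Fin k,
      rowN b γ π (p2N b γ π (f a)) = ((π (F (aF a)) : Fin n) : ℕ) := by
    intro a
    rw [rowN_p2N (f a).2, hcolFin a]
  have hp2v : ∀ a : Fin k,
      ((toPerm (mm b γ π) (p2N b γ π) (f a) : Fin (mm b γ π)) : ℕ) = p2N b γ π (f a) :=
    fun a => toPerm_p2N_val (f a)
  refine ⟨OrderEmbedding.ofStrictMono f hfsm, ?_, ?_⟩
  · intro a c
    show δ a < δ c ↔ toPerm (mm b γ π) (p2N b γ π) (f a) < toPerm (mm b γ π) (p2N b γ π) (f c)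
    have h1 : δ a < δ c ↔ π (F (aF a)) < π (F (aF c)) := by
      have h2 := hpat (aF a) (aF c)
      rw [blockSum_lt_AA (show ((aF a : Fin (k + j)) : ℕ) < k from a.isLt)
        (show ((aF c : Fin (k + j)) : ℕ) < k from c.isLt)] at h2
      have h3 : (⟨((aF a : Fin (k + j)) : ℕ), _⟩ : Fin k) = a := Fin.ext rfl
      have h4 : (⟨((aF c : Fin (k + j)) : ℕ), _⟩ : Fin k) = c := Fin.ext rfl
      rwa [h3, h4] at h2
    have e1 : toPerm (mm b γ π) (p2N b γ π) (f a) < toPerm (mm b γ π) (p2N b γ π) (f c) ↔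
        p2N b γ π (f a) < p2N b γ π (f c) := by
      rw [Fin.lt_def, hp2v a, hp2v c]
    have e2 : p2N b γ π (f a) < p2N b γ π (f c) ↔
        rowN b γ π (p2N b γ π (f a)) < rowN b γ π (p2N b γ π (f c)) :=
      (enum_lt_enum (s := Trows b γ π) (by rw [Trows_card]; exact p2N_lt (f a).2)
        (by rw [Trows_card]; exact p2N_lt (f c).2)).symm
    have e3 : rowN b γ π (p2N b γ π (f a)) < rowN b γ π (p2N b γ π (f c)) ↔
        ((π (F (aF a)) : Fin n) : ℕ) < ((π (F (aF c)) : Fin n) : ℕ) := by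
      rw [hrowval a, hrowval c]
    exact h1.trans (Fin.lt_def.trans (e3.symm.trans (e2.symm.trans e1.symm)))
  · intro a c
    show ((f a : Fin (mm b γ π)) : ℕ) <
      b2N b γ π ((toPerm (mm b γ π) (p2N b γ π) (f c) : Fin (mm b γ π)) : ℕ)
    rw [lt_b2N]
    refine ⟨(f a).2, ?_⟩
    have h5 : rowN b γ π ((toPerm (mm b γ π) (p2N b γ π) (f c) : Fin (mm b γ π)) : ℕ) =
        ((π (F (aF c)) : Fin n) : ℕ) := by rw [hp2v c, hrowval c]
    rw [h5, hcolN a]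
    exact lt_b1.mpr ⟨hcross (aF a) (aF c), ⟨g, hsupp a c⟩⟩

lemma contains_iff (hk : 0 < k) (hj : 0 < j) (hY : IsYoungShape n b) :
    ShapeContains n b ⇑π (blockSum ⇑δ ⇑γ) ↔
      ShapeContains (mm b γ π) (b2N b γ π) ⇑(toPerm (mm b γ π) (p2N b γ π)) ⇑δ :=
  ⟨contains_mp hk hj, contains_mpr hk hj hY⟩

end L1

section Boundary

variable {b : ℕ → ℕ} {γ : Equiv.Perm (Fin j)}

/-- the transversals of `(M, B)` avoiding `δ` -/
abbrev AvT (M : ℕ) (B : ℕ → ℕ) (δ : Equiv.Perm (Fin k)) : Type :=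
  {σ : Equiv.Perm (Fin M) // IsTransversal M B σ ∧ ¬ ShapeContains M B ⇑σ ⇑δ}

lemma avt_equiv_nonempty {M : ℕ} {B : ℕ → ℕ} {δ δ' : Equiv.Perm (Fin k)}
    (hcard : shapeAvoidCard M B ⇑δ = shapeAvoidCard M B ⇑δ') :
    Nonempty (AvT M B δ ≃ AvT M B δ') := by
  have h1 : Nat.card (AvT M B δ) = Nat.card (AvT M B δ') := hcard
  let i1 : Fintype (AvT M B δ) := Fintype.ofFinite _
  let i2 : Fintype (AvT M B δ') := Fintype.ofFinite _
  exact ⟨Fintype.equivOfCardEq (by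
    rw [← Nat.card_eq_fintype_card, ← Nat.card_eq_fintype_card]; exact h1)⟩

lemma shapeContains_congr {M M' : ℕ} (hM : M' = M) {B B' : ℕ → ℕ} (hB : B' = B)
    {σ : Equiv.Perm (Fin M)} {σ' : Equiv.Perm (Fin M')}
    (hs : ∀ x (hx : x < M') (hx' : x < M), ((σ' ⟨x, hx⟩ : Fin M') : ℕ) = ((σ ⟨x, hx'⟩ : Fin M) : ℕ))
    (δ : Equiv.Perm (Fin k)) :
    ShapeContains M' B' ⇑σ' ⇑δ ↔ ShapeContains M B ⇑σ ⇑δ := by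
  subst hM; subst hB
  have hss : σ' = σ := Equiv.ext fun c => Fin.ext (hs c c.2 c.2)
  rw [hss]

lemma avt_val_congr {M M' : ℕ} (hM : M' = M) {B B' : ℕ → ℕ} (hB : B' = B)
    {δ δ' : Equiv.Perm (Fin k)} (EE : ∀ M B, IsYoungShape M B → AvT M B δ ≃ AvT M B δ')
    (h : IsYoungShape M B) (h' : IsYoungShape M' B')
    (s : AvT M B δ) (s' : AvT M' B' δ)
    (hs : ∀ x (hx : x < M') (hx' : x < M), ((s'.1 ⟨x, hx⟩ : Fin M') : ℕ) = ((s.1 ⟨x, hx'⟩ : Fin M) : ℕ))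
    (x : ℕ) (hx : x < M') (hx' : x < M) :
    (((EE M' B' h' s').1 ⟨x, hx⟩ : Fin M') : ℕ) = (((EE M B h s).1 ⟨x, hx'⟩ : Fin M) : ℕ) := by
  subst hM; subst hB
  have hss : s' = s := Subtype.ext (Equiv.ext fun c => Fin.ext (hs c c.2 c.2))
  subst hss
  rfl

variable (b γ)

/-- the condition under which the replacement is performed -/
def QCond (δ : Equiv.Perm (Fin k)) (π : Equiv.Perm (Fin n)) : Prop :=
  IsYoungShape (mm b γ π) (b2N b γ π) ∧
    IsTransversal (mm b γ π) (b2N b γ π) (toPerm (mm b γ π) (p2N b γ π)) ∧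
    ¬ ShapeContains (mm b γ π) (b2N b γ π) ⇑(toPerm (mm b γ π) (p2N b γ π)) ⇑δ

/-- the new pattern of the 1's inside the supported subdiagram, as a function `ℕ → ℕ` -/
noncomputable def qOf (δ δ' : Equiv.Perm (Fin k))
    (EE : ∀ M B, IsYoungShape M B → AvT M B δ ≃ AvT M B δ') (π : Equiv.Perm (Fin n)) :
    ℕ → ℕ :=
  if h : QCond b γ δ π then
    fun x => if hx : x < mm b γ π then
      (((EE (mm b γ π) (b2N b γ π) h.1 ⟨toPerm (mm b γ π) (p2N b γ π), h.2⟩).1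
        ⟨x, hx⟩ : Fin (mm b γ π)) : ℕ) else x
  else p2N b γ π

variable {b γ}
variable {δ δ' : Equiv.Perm (Fin k)}
  {EE : ∀ M B, IsYoungShape M B → AvT M B δ ≃ AvT M B δ'} {π : Equiv.Perm (Fin n)}

lemma qCond_holds (hk : 0 < k) (hj : 0 < j) (hY : IsYoungShape n b)
    (hav : ¬ ShapeContains n b ⇑π (blockSum ⇑δ ⇑γ)) : QCond b γ δ π :=
  ⟨young_b2N hY, toPerm_p2N_transversal, fun hc => hav (contains_mpr hk hj hY hc)⟩

lemma qOf_val (h : QCond b γ δ π) {x : ℕ} (hx : x < mm b γ π) :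
    qOf b γ δ δ' EE π x =
      (((EE (mm b γ π) (b2N b γ π) h.1 ⟨toPerm (mm b γ π) (p2N b γ π), h.2⟩).1
        ⟨x, hx⟩ : Fin (mm b γ π)) : ℕ) := by
  unfold qOf
  rw [dif_pos h]
  exact dif_pos hx

lemma qOf_id (h : QCond b γ δ π) {x : ℕ} (hx : ¬ x < mm b γ π) :
    qOf b γ δ δ' EE π x = x := by
  unfold qOf
  rw [dif_pos h]
  exact dif_neg hx

lemma qOf_good (h : QCond b γ δ π) :
    Good b γ π (qOf b γ δ δ' EE π) ∧
      ∀ x, x < mm b γ π → x < b2N b γ π (qOf b γ δ δ' EE π x) := by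
  set σ := EE (mm b γ π) (b2N b γ π) h.1 ⟨toPerm (mm b γ π) (p2N b γ π), h.2⟩ with hσ
  refine ⟨⟨fun x hx => ?_, fun x y hx hy hxy => ?_⟩, fun x hx => ?_⟩
  · rw [qOf_val h hx]; exact (σ.1 ⟨x, hx⟩).isLt
  · rw [qOf_val h hx, qOf_val h hy] at hxy
    have := σ.1.injective (Fin.ext hxy)
    exact congrArg Fin.val this
  · rw [qOf_val h hx]
    exact σ.2.1 ⟨x, hx⟩

/-- all properties of the replaced transversal -/
lemma qOf_replace_spec (hk : 0 < k) (hj : 0 < j) (hY : IsYoungShape n b)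
    (hπ : IsTransversal n b π) (hav : ¬ ShapeContains n b ⇑π (blockSum ⇑δ ⇑γ)) :
    IsTransversal n b (replace b γ π (qOf b γ δ δ' EE π)) ∧
    ¬ ShapeContains n b ⇑(replace b γ π (qOf b γ δ δ' EE π)) (blockSum ⇑δ' ⇑γ) ∧
    QCond b γ δ' (replace b γ π (qOf b γ δ δ' EE π)) := by
  have hc := qCond_holds hk hj hY hav
  obtain ⟨hgood, hq3⟩ := qOf_good (EE := EE) hc
  set q := qOf b γ δ δ' EE π with hqdef
  set π' := replace b γ π q with hπ'def
  set σ := EE (mm b γ π) (b2N b γ π) hc.1 ⟨toPerm (mm b γ π) (p2N b γ π), hc.2⟩ with hσ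
  have htrans : IsTransversal n b π' := replace_transversal hπ hgood hq3
  have hmm' : mm b γ π' = mm b γ π := mm_replace hj hgood hq3
  have hb2' : b2N b γ π' = b2N b γ π := b2N_replace hj hgood hq3
  have hp2' : p2N b γ π' = fun x => if x < mm b γ π then q x else x :=
    p2N_replace hj hgood hq3
  have hp2q : p2N b γ π' = q := by
    rw [hp2']
    funext x
    by_cases hx : x < mm b γ π
    · rw [if_pos hx]
    · rw [if_neg hx, hqdef, qOf_id hc hx]
  have hvals : ∀ x (hx : x < mm b γ π') (hx' : x < mm b γ π),
      ((toPerm (mm b γ π') (p2N b γ π') ⟨x, hx⟩ : Fin (mm b γ π')) : ℕ) =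
        ((σ.1 ⟨x, hx'⟩ : Fin (mm b γ π)) : ℕ) := by
    intro x hx hx'
    rw [toPerm_p2N_val, hp2q]
    exact qOf_val hc hx'
  have hiff : ShapeContains (mm b γ π') (b2N b γ π')
      ⇑(toPerm (mm b γ π') (p2N b γ π')) ⇑δ' ↔
      ShapeContains (mm b γ π) (b2N b γ π) ⇑σ.1 ⇑δ' :=
    shapeContains_congr hmm' hb2' hvals δ'
  have havoid' : ¬ ShapeContains n b ⇑π' (blockSum ⇑δ' ⇑γ) := by
    intro hcon
    exact σ.2.2 (hiff.mp (contains_mp hk hj hcon))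
  refine ⟨htrans, havoid', young_b2N hY, toPerm_p2N_transversal, ?_⟩
  intro hcon
  exact σ.2.2 (hiff.mp hcon)

lemma qOf_roundtrip (hk : 0 < k) (hj : 0 < j) (hY : IsYoungShape n b)
    {EE' : ∀ M B, IsYoungShape M B → AvT M B δ' ≃ AvT M B δ}
    (hinv : ∀ M B (hYB : IsYoungShape M B) (s : AvT M B δ), EE' M B hYB (EE M B hYB s) = s)
    (hπ : IsTransversal n b π) (hav : ¬ ShapeContains n b ⇑π (blockSum ⇑δ ⇑γ)) :
    replace b γ (replace b γ π (qOf b γ δ δ' EE π))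
      (qOf b γ δ' δ EE' (replace b γ π (qOf b γ δ δ' EE π))) = π := by
  have hc := qCond_holds hk hj hY hav
  obtain ⟨hgood, hq3⟩ := qOf_good (EE := EE) hc
  set q := qOf b γ δ δ' EE π with hqdef
  set π' := replace b γ π q with hπ'def
  set s0 : AvT (mm b γ π) (b2N b γ π) δ :=
    ⟨toPerm (mm b γ π) (p2N b γ π), hc.2⟩ with hs0
  set σ := EE (mm b γ π) (b2N b γ π) hc.1 s0 with hσ
  obtain ⟨htrans', -, hc'⟩ := qOf_replace_spec (EE := EE) hk hj hY hπ hav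
  obtain ⟨hgood', hq3'⟩ := qOf_good (EE := EE') hc'
  have hS' : Scols b γ π' = Scols b γ π := Scols_replace hj hgood hq3
  have hmm' : mm b γ π' = mm b γ π := mm_replace hj hgood hq3
  have hcol' : colN b γ π' = colN b γ π := colN_replace hj hgood hq3
  have hrow' : rowN b γ π' = rowN b γ π := rowN_replace hj hgood hq3
  have hb2' : b2N b γ π' = b2N b γ π := b2N_replace hj hgood hq3
  have hp2q : p2N b γ π' = q := by
    rw [p2N_replace hj hgood hq3]
    funext x
    by_cases hx : x < mm b γ π
    · rw [if_pos hx]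
    · rw [if_neg hx, hqdef, qOf_id hc hx]
  -- the value of the backwards replacement is the original pattern
  have hq'val : ∀ x (hx : x < mm b γ π'),
      qOf b γ δ' δ EE' π' x = p2N b γ π x := by
    intro x hx
    have hx2 : x < mm b γ π := hmm' ▸ hx
    rw [qOf_val hc' hx]
    have h1 := avt_val_congr hmm' hb2' EE' hc.1 hc'.1 σ
      ⟨toPerm (mm b γ π') (p2N b γ π'), hc'.2⟩
      (fun y hy hy' => by rw [toPerm_p2N_val, hp2q]; exact qOf_val hc hy') x hx hx2
    rw [h1, hinv (mm b γ π) (b2N b γ π) hc.1 s0]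
    exact toPerm_p2N_val ⟨x, hx2⟩
  symm
  apply replace_unique hgood'
  · intro i hi
    rw [hS'] at hi
    exact (replace_off hi).symm
  · intro x hx
    have hx2 : x < mm b γ π := hmm' ▸ hx
    have hcoleq : (⟨colN b γ π' x, colN_lt hx⟩ : Fin n) = ⟨colN b γ π x, colN_lt hx2⟩ :=
      Fin.ext (show colN b γ π' x = colN b γ π x by rw [hcol'])
    rw [hcoleq, hq'val x hx, hrow']
    exact (rowN_p2N hx2).symm

end Boundary

section Main

variable {b : ℕ → ℕ} {γ : Equiv.Perm (Fin j)}

noncomputable def mainEquiv (hk : 0 < k) (hj : 0 < j) (hY : IsYoungShape n b)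
    (δ δ' : Equiv.Perm (Fin k))
    (EE : ∀ M B, IsYoungShape M B → AvT M B δ ≃ AvT M B δ')
    (EE' : ∀ M B, IsYoungShape M B → AvT M B δ' ≃ AvT M B δ)
    (hinv : ∀ M B (hYB : IsYoungShape M B) (s : AvT M B δ), EE' M B hYB (EE M B hYB s) = s)
    (hinv' : ∀ M B (hYB : IsYoungShape M B) (s : AvT M B δ'), EE M B hYB (EE' M B hYB s) = s) :
    {π : Equiv.Perm (Fin n) //
      IsTransversal n b π ∧ ¬ ShapeContains n b ⇑π (blockSum ⇑δ ⇑γ)} ≃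
    {π : Equiv.Perm (Fin n) //
      IsTransversal n b π ∧ ¬ ShapeContains n b ⇑π (blockSum ⇑δ' ⇑γ)} where
  toFun t := ⟨replace b γ t.1 (qOf b γ δ δ' EE t.1),
    (qOf_replace_spec (EE := EE) hk hj hY t.2.1 t.2.2).1,
    (qOf_replace_spec (EE := EE) hk hj hY t.2.1 t.2.2).2.1⟩
  invFun t := ⟨replace b γ t.1 (qOf b γ δ' δ EE' t.1),
    (qOf_replace_spec (EE := EE') hk hj hY t.2.1 t.2.2).1,
    (qOf_replace_spec (EE := EE') hk hj hY t.2.1 t.2.2).2.1⟩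
  left_inv t := Subtype.ext (qOf_roundtrip hk hj hY hinv t.2.1 t.2.2)
  right_inv t := Subtype.ext (qOf_roundtrip hk hj hY hinv' t.2.1 t.2.2)

end Main

end BW

/-- If the permutation matrices `A`, `B` (of size `k`) are shape-Wilf-equivalent, then
for any permutation matrix `C`, `diag(A, C)` and `diag(B, C)` are
shape-Wilf-equivalent. -/
theorem blockSum_shapeWilfEquiv {k j : ℕ} (α β : Equiv.Perm (Fin k))
    (γ : Equiv.Perm (Fin j)) (h : ShapeWilfEquiv (⇑α) (⇑β)) :
    ShapeWilfEquiv (blockSum (⇑α) (⇑γ)) (blockSum (⇑β) (⇑γ)) := by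
  rcases Nat.eq_zero_or_pos k with hk0 | hk
  · subst hk0
    have hab : ⇑α = ⇑β := funext fun i => i.elim0
    rw [hab]
    intro n b _
    rfl
  rcases Nat.eq_zero_or_pos j with hj0 | hj
  · subst hj0
    intro n b hY
    have hbs : ∀ (δ : Equiv.Perm (Fin k)) (π : Equiv.Perm (Fin n)),
        ShapeContains n b ⇑π (blockSum ⇑δ ⇑γ) ↔ ShapeContains n b ⇑π ⇑δ := by
      intro δ π
      have hlt : ∀ a c : Fin (k + 0),
          (blockSum ⇑δ ⇑γ a < blockSum ⇑δ ⇑γ c ↔ δ a < δ c) := by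
        intro a c
        rw [BW.blockSum_lt_AA (a.isLt) (c.isLt)]
        exact Iff.rfl
      constructor
      · rintro ⟨f, h1, h2⟩
        exact ⟨f, fun a c => ((hlt a c).symm.trans (h1 a c)), h2⟩
      · rintro ⟨f, h1, h2⟩
        exact ⟨f, fun a c => ((hlt a c).trans (h1 a c)), h2⟩
    calc shapeAvoidCard n b (blockSum ⇑α ⇑γ)
        = shapeAvoidCard n b ⇑α := Nat.card_congr (Equiv.subtypeEquivRight fun π =>
          and_congr_right fun _ => not_congr (hbs α π))
      _ = shapeAvoidCard n b ⇑β := h n b hY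
      _ = shapeAvoidCard n b (blockSum ⇑β ⇑γ) :=
          (Nat.card_congr (Equiv.subtypeEquivRight fun π =>
            and_congr_right fun _ => not_congr (hbs β π))).symm
  · intro n b hY
    have E : ∀ M B, IsYoungShape M B → BW.AvT M B α ≃ BW.AvT M B β :=
      fun M B hYB => Classical.choice (BW.avt_equiv_nonempty (h M B hYB))
    exact Nat.card_congr (BW.mainEquiv hk hj hY α β E (fun M B hYB => (E M B hYB).symm)
      (fun M B hYB s => (E M B hYB).symm_apply_apply s)
      (fun M B hYB s => (E M B hYB).apply_symm_apply s))
end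

section
/- Key splitting lemma: let Y be a Young diagram of size n and consider a 213-avoiding transversal T of Y whose 1 in the bottom row lies in bottom cell C = (n,i) with 1 < i < m (m the number of bottom cells). Then every 1 of T in a column strictly to the left of column i lies in a row strictly above every 1 of T in a column of the subdiagram A_C. -/
/-- The size `k` of the subdiagram `A_C` associated to the bottom cell `C` in column `c`
(0-indexed) of the Young diagram `b` of size `n`: the 45° ray drawn north-east from the
top-right corner of `C` in the reduction `Y/C` first meets the border of `Y/C` after
passing through `k` cells.  (`k = 0`, i.e. `A_C = ∅`, exactly when the first diagonal
cell is already missing.) -/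
noncomputable def rdK (n : ℕ) (b : ℕ → ℕ) (c : ℕ) : ℕ :=
  sInf {s : ℕ | (s = 0 ∧ (n ≤ 1 ∨ b 1 ≤ c + 1)) ∨ (1 ≤ s ∧ b s ≤ c + s + 1)}

/-- The row lengths (from the bottom) of the Young diagram `A_C` for the bottom cell in
column `c`: it occupies rows `1..k` of `Y` and the `k` columns `c+1, ..., c+k`. -/
noncomputable def rdA (n : ℕ) (b : ℕ → ℕ) (c : ℕ) (t : ℕ) : ℕ :=
  min (rdK n b c) (b (t + 1) - (c + 1))

/-- The row lengths (from the bottom) of the Young diagram `B_C` for the bottom cell in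
column `c`: what remains of `Y/C` after deleting the rows and columns of `A_C`;
it has size `n - 1 - k`. -/
noncomputable def rdB (n : ℕ) (b : ℕ → ℕ) (c : ℕ) (r : ℕ) : ℕ :=
  b (rdK n b c + 1 + r) - 1 - rdK n b c

/-!
Fix a column `x` left of `c` and take the leftmost column `y` of `A_C` whose 1 lies above
that of `x`. The columns `c, …, y - 1` carry distinct rows, one of them the bottom row, and
by minimality all of them lie below row `π x`; pick the highest one, `z`. Counting gives
`π z ≥ y - c - 1`, which is exactly what places the cell `(y, π z)` inside `Y`, by the
definition of `A_C` as the diagonal ray from the corner of `C`. Then `x, z, y` form a `213`.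
-/

open Finset

theorem Finset.exists_card_le_apply_add_one {α : Type*} (s : Finset α) (hs : s.Nonempty)
    {f : α → ℕ} (hf : Set.InjOn f s) : ∃ z ∈ s, #s ≤ f z + 1 := by
  obtain ⟨z, hz, hmax⟩ := s.exists_max_image f hs
  refine ⟨z, hz, ?_⟩
  have hsub : s.image f ⊆ range (f z + 1) := by
    simp only [subset_iff, mem_image, mem_range, forall_exists_index, and_imp]
    rintro _ w hw rfl
    exact Nat.lt_succ_of_le (hmax w hw)
  simpa [card_image_of_injOn hf] using card_le_card hsub

namespace IsYoungShape

variable {n : ℕ} {b : ℕ → ℕ}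

/-- Below row `rdK`, row `s ≥ 1` reaches column `c + s + 1`, the diagonal ray from the corner
of `C`; higher rows are at least as long as row `rdK - 1` (or row `1`). -/
theorem add_lt_of_le_rdK (hY : IsYoungShape n b) {c t s : ℕ} (hc : c + 1 < b 0)
    (ht : 1 ≤ t) (htk : t ≤ rdK n b c) (hts : t - 1 ≤ s) (hsn : s < n) :
    c + t < b s := by
  have hmono := hY.1
  set k := rdK n b c
  have hlt : ∀ u, u < k → ¬ ((u = 0 ∧ (n ≤ 1 ∨ b 1 ≤ c + 1)) ∨ (1 ≤ u ∧ b u ≤ c + u + 1)) :=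
    fun u hu => Nat.notMem_of_lt_sInf hu
  have hb1 : c + 1 < b 1 := by have := hlt 0 (by omega); omega
  rcases Nat.eq_zero_or_pos s with rfl | hs
  · omega
  rcases Nat.lt_or_ge s k with hsk | hsk
  · have := hlt s hsk
    omega
  rcases Nat.lt_or_ge k 2 with hk | hk
  · have := hmono 1 s hs hsn
    omega
  · have := hlt (k - 1) (by omega)
    have := hmono (k - 1) s (by omega) hsn
    omega

/-- Only the cell in the column of the `2` and the row of the `1` needs checking: every other
crossing cell lies weakly left of it in a row weakly above it. -/
theorem shapeContains_213 (hY : IsYoungShape n b) {π : Equiv.Perm (Fin n)} {x z y : Fin n}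
    (hxz : x < z) (hzy : z < y) (hzx : π z < π x) (hxy : π x < π y) (hcell : (y : ℕ) < b (π z)) :
    ShapeContains n b ⇑π (![1, 0, 2] : Fin 3 → Fin 3) := by
  have hrow : ∀ w, π z ≤ w → (y : ℕ) < b w := fun w hw =>
    hcell.trans_le (hY.1 _ _ (Fin.le_def.mp hw) w.isLt)
  have hcol : StrictMono (![x, z, y] : Fin 3 → Fin n) := by
    simp only [Fin.strictMono_iff_lt_succ, Fin.forall_fin_two]
    exact ⟨hxz, hzy⟩
  have := hrow (π x) hzx.le
  have := hrow (π y) (hzx.trans hxy).le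
  rw [Fin.lt_def] at hxz hzy hzx hxy
  refine ⟨OrderEmbedding.ofStrictMono _ hcol, ?_, ?_⟩ <;>
    intro i j <;> fin_cases i <;> fin_cases j <;> simp <;> omega

end IsYoungShape

theorem splitting_lemma_general (n : ℕ) (b : ℕ → ℕ) (hn : 0 < n) (hY : IsYoungShape n b)
    (π : Equiv.Perm (Fin n))
    (hA : ¬ ShapeContains n b ⇑π (![1,0,2] : Fin 3 → Fin 3))
    (c : Fin n) (h2 : (c : ℕ) + 1 < b 0)
    (hbot : π c = ⟨0, hn⟩) :
    ∀ x y : Fin n, (x : ℕ) < (c : ℕ) → (c : ℕ) < (y : ℕ) →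
      (y : ℕ) ≤ (c : ℕ) + rdK n b (c : ℕ) → π y < π x := by
  intro x y hx
  induction y using WellFoundedLT.induction with
  | _ y ih =>
    intro hcy hyk
    have hbelow : ∀ w, c ≤ w → w < y → π w < π x := by
      intro w hcw hwy
      rcases hcw.eq_or_lt with rfl | hcw
      · have hxc : π x ≠ π c := fun h => (Fin.ne_of_lt hx) (π.injective h)
        rw [hbot] at hxc ⊢
        exact Fin.lt_def.mpr (Nat.pos_of_ne_zero fun h => hxc (Fin.ext h))
      · exact ih w hwy hcw (by omega)
    obtain ⟨z, hz, hzy⟩ := (Ico c y).exists_card_le_apply_add_one (nonempty_Ico.mpr hcy)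
      (f := fun w => (π w : ℕ)) fun _ _ _ _ h => π.injective (Fin.ext h)
    rw [mem_Ico] at hz
    rw [Fin.card_Ico] at hzy
    by_contra hyx
    refine hA (hY.shapeContains_213 (hx.trans_le hz.1) hz.2 (hbelow z hz.1 hz.2) ?_ ?_)
    · refine lt_of_le_of_ne (not_lt.mp hyx) fun h => ?_
      have := congrArg Fin.val (π.injective h)
      omega
    · have := hY.add_lt_of_le_rdK (t := y - c) h2 (by omega) (by omega) (by omega) (π z).isLt
      omega

/-- Key splitting lemma: in a 213-avoiding transversal whose bottom-row 1 lies in the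
bottom cell of column `c` with `0 < c < m - 1` (`m = b 0` bottom cells), every 1 in a
column strictly left of `c` lies in a row strictly above every 1 in a column of `A_C`
(the columns `c+1, ..., c + k`). -/
theorem splitting_lemma (n : ℕ) (b : ℕ → ℕ) (hn : 0 < n) (hY : IsYoungShape n b)
    (π : Equiv.Perm (Fin n)) (hT : IsTransversal n b π)
    (hA : ¬ ShapeContains n b ⇑π (![1,0,2] : Fin 3 → Fin 3))
    (c : Fin n) (h1 : 0 < (c : ℕ)) (h2 : (c : ℕ) + 1 < b 0)
    (hbot : π c = ⟨0, hn⟩) :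
    ∀ x y : Fin n, (x : ℕ) < (c : ℕ) → (c : ℕ) < (y : ℕ) →
      (y : ℕ) ≤ (c : ℕ) + rdK n b (c : ℕ) → π y < π x :=
  splitting_lemma_general n b hn hY π hA c h2 hbot
end

section
/- The first and last bottom cells impose no condition: if C is the leftmost bottom cell (n,1) or the last bottom cell (n,m) of a Young diagram Y of size n, then the number of 213-avoiding transversals of Y with the bottom-row 1 placed at C equals T(Y^r), where Y^r is the reduction of Y along a bottom cell. -/
/-- `T Y`: the number of 213-avoiding transversals of the Young diagram `Y`
(the pattern 213 written 0-indexed is `![1,0,2]`). -/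
noncomputable def T (n : ℕ) (b : ℕ → ℕ) : ℕ :=
  shapeAvoidCard n b (![1,0,2] : Fin 3 → Fin 3)

-- auxiliary
open Equiv

def liftPerm {m : ℕ} (c : Fin (m+1)) (σ : Equiv.Perm (Fin m)) : Equiv.Perm (Fin (m+1)) :=
  ((finSuccEquiv' c).trans σ.optionCongr).trans (finSuccEquiv' 0).symm

lemma liftPerm_at {m : ℕ} (c : Fin (m+1)) (σ : Equiv.Perm (Fin m)) : liftPerm c σ c = 0 := by
  simp [liftPerm, finSuccEquiv'_at]

lemma liftPerm_succAbove {m : ℕ} (c : Fin (m+1)) (σ : Equiv.Perm (Fin m)) (i : Fin m) :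
    liftPerm c σ (c.succAbove i) = (σ i).succ := by
  simp [liftPerm, finSuccEquiv'_succAbove, finSuccEquiv'_symm_some, Fin.zero_succAbove]

lemma succAbove_val {m : ℕ} (c : Fin (m+1)) (i : Fin m) :
    (c.succAbove i : ℕ) = if (i : ℕ) < (c : ℕ) then (i : ℕ) else (i : ℕ) + 1 := by
  rcases Nat.lt_or_ge (i : ℕ) (c : ℕ) with h | h
  · rw [if_pos h, Fin.succAbove_of_castSucc_lt _ _ (by simpa [Fin.lt_def] using h)]
    simp
  · rw [if_neg (by omega), Fin.succAbove_of_le_castSucc _ _ (by simpa [Fin.le_def] using h)]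
    simp

def dropPermFun {m : ℕ} (c : Fin (m+1)) (π : Equiv.Perm (Fin (m+1))) (h : π c = 0)
    (i : Fin m) : Fin m :=
  (π (c.succAbove i)).pred (fun h0 => (Fin.succAbove_ne c i) (π.injective (h0.trans h.symm)))

noncomputable def dropPerm {m : ℕ} (c : Fin (m+1)) (π : Equiv.Perm (Fin (m+1))) (h : π c = 0) :
    Equiv.Perm (Fin m) :=
  Equiv.ofBijective (dropPermFun c π h) (by
    refine Finite.injective_iff_bijective.mp ?_
    intro a a' haa
    have : π (c.succAbove a) = π (c.succAbove a') := by
      have := congrArg Fin.succ haa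
      simpa [dropPermFun, Fin.succ_pred] using this
    exact Fin.succAbove_right_injective (π.injective this))

lemma dropPerm_apply {m : ℕ} (c : Fin (m+1)) (π : Equiv.Perm (Fin (m+1))) (h : π c = 0)
    (i : Fin m) : dropPerm c π h i = dropPermFun c π h i := rfl

lemma lift_drop {m : ℕ} (c : Fin (m+1)) (π : Equiv.Perm (Fin (m+1))) (h : π c = 0) :
    liftPerm c (dropPerm c π h) = π := by
  ext j
  rcases eq_or_ne j c with rfl | hj
  · rw [liftPerm_at, h]
  · obtain ⟨i, rfl⟩ := Fin.exists_succAbove_eq hj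
    rw [liftPerm_succAbove, dropPerm_apply]
    simp [dropPermFun, Fin.succ_pred]

lemma drop_lift {m : ℕ} (c : Fin (m+1)) (σ : Equiv.Perm (Fin m)) :
    dropPerm c (liftPerm c σ) (liftPerm_at c σ) = σ := by
  ext i
  rw [dropPerm_apply]
  simp [dropPermFun, liftPerm_succAbove, Fin.pred_succ]

section Key
variable {m : ℕ} {b : ℕ → ℕ} {c : Fin (m+1)}

lemma transversal_iff (hY : IsYoungShape (m+1) b) (hcb : (c : ℕ) < b 0)
    (hc : (c : ℕ) = 0 ∨ (c : ℕ) = b 0 - 1) (σ : Equiv.Perm (Fin m)) :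
    IsTransversal (m+1) b (liftPerm c σ) ↔ IsTransversal m (fun i => b (i + 1) - 1) σ := by
  have hb0 : 0 < b 0 := (hY.2 0 (Nat.succ_pos m)).1
  constructor
  · intro h i
    have hi := h (c.succAbove i)
    rw [liftPerm_succAbove, succAbove_val] at hi
    simp only [Fin.val_succ] at hi
    have hmono : b 0 ≤ b ((σ i : ℕ) + 1) := hY.1 0 ((σ i : ℕ) + 1) (Nat.zero_le _) (by
      have := (σ i).isLt; omega)
    show (i : ℕ) < b ((σ i : ℕ) + 1) - 1
    by_cases hlt : (i : ℕ) < (c : ℕ)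
    · rw [if_pos hlt] at hi
      rcases hc with hc | hc <;> omega
    · rw [if_neg hlt] at hi
      omega
  · intro h j
    rcases eq_or_ne j c with rfl | hj
    · rw [liftPerm_at]
      simpa using hcb
    · obtain ⟨i, rfl⟩ := Fin.exists_succAbove_eq hj
      rw [liftPerm_succAbove, succAbove_val]
      have hi := h i
      simp only [Fin.val_succ] at hi ⊢
      show (if (i : ℕ) < (c : ℕ) then (i : ℕ) else (i : ℕ) + 1) < b ((σ i : ℕ) + 1)
      have hi' : (i : ℕ) < b ((σ i : ℕ) + 1) - 1 := hi
      split <;> omega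

lemma contains_iff (hY : IsYoungShape (m+1) b) (hcb : (c : ℕ) < b 0)
    (hc : (c : ℕ) = 0 ∨ (c : ℕ) = b 0 - 1) (σ : Equiv.Perm (Fin m)) :
    ShapeContains (m+1) b ⇑(liftPerm c σ) (![1,0,2] : Fin 3 → Fin 3) ↔
      ShapeContains m (fun i => b (i + 1) - 1) ⇑σ (![1,0,2] : Fin 3 → Fin 3) := by
  have hb0 : 0 < b 0 := (hY.2 0 (Nat.succ_pos m)).1
  constructor
  · rintro ⟨f, hord, hsh⟩
    have hne : ∀ a, f a ≠ c := by
      intro a hfa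
      have hπ : liftPerm c σ (f a) = 0 := by rw [hfa]; exact liftPerm_at c σ
      have hmin : ∀ x, x ≠ a → (![1,0,2] : Fin 3 → Fin 3) a < ![1,0,2] x := by
        intro x hx
        rw [hord a x, hπ]
        apply Fin.pos_of_ne_zero
        intro h0
        exact hx (f.injective ((liftPerm c σ).injective (h0.trans hπ.symm)))
      have ha1 : a = 1 := by
        fin_cases a
        · exact absurd (hmin 1 (by decide)) (by decide)
        · rfl
        · exact absurd (hmin 1 (by decide)) (by decide)
      subst ha1
      have h2 : (f 2 : ℕ) < b 0 := by
        have h' := hsh 2 1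
        rw [hfa, liftPerm_at] at h'
        simpa using h'
      have h12 : (c : ℕ) < (f 2 : ℕ) := by
        have := f.strictMono (show (1 : Fin 3) < 2 by decide)
        rw [hfa] at this
        exact this
      have h01 : (f 0 : ℕ) < (c : ℕ) := by
        have := f.strictMono (show (0 : Fin 3) < 1 by decide)
        rw [hfa] at this
        exact this
      rcases hc with hc | hc <;> omega
    choose g hg using fun a => Fin.exists_succAbove_eq (hne a)
    have hval : ∀ a, (liftPerm c σ) (f a) = (σ (g a)).succ := by
      intro a; rw [← hg a, liftPerm_succAbove]
    have hgmono : StrictMono g := by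
      intro a a' haa
      rw [← Fin.succAbove_lt_succAbove_iff (p := c), hg, hg]
      exact f.strictMono haa
    refine ⟨OrderEmbedding.ofStrictMono g hgmono, ?_, ?_⟩
    · intro a a'
      rw [hord a a', hval, hval]
      show (σ (g a)).succ < (σ (g a')).succ ↔ σ (g a) < σ (g a')
      exact Fin.succ_lt_succ_iff
    · intro a a'
      have hs := hsh a a'
      rw [hval a', ← hg a, succAbove_val] at hs
      simp only [Fin.val_succ] at hs
      show (g a : ℕ) < b ((σ (g a') : ℕ) + 1) - 1
      have hmono : b 0 ≤ b ((σ (g a') : ℕ) + 1) := hY.1 0 _ (Nat.zero_le _) (by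
        have := (σ (g a')).isLt; omega)
      by_cases hlt : ((g a : ℕ)) < (c : ℕ)
      · rw [if_pos hlt] at hs
        rcases hc with hc | hc <;> omega
      · rw [if_neg hlt] at hs
        omega
  · rintro ⟨f, hord, hsh⟩
    have happ : ∀ x, (f.trans (Fin.succAboveOrderEmb c)) x = c.succAbove (f x) := fun _ => rfl
    refine ⟨f.trans (Fin.succAboveOrderEmb c), ?_, ?_⟩
    · intro a a'
      rw [hord a a', happ, happ, liftPerm_succAbove, liftPerm_succAbove]
      exact Fin.succ_lt_succ_iff.symm
    · intro a a'
      rw [happ, happ, liftPerm_succAbove, succAbove_val]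
      have hs := hsh a a'
      have hs' : (f a : ℕ) < b ((σ (f a') : ℕ) + 1) - 1 := hs
      simp only [Fin.val_succ]
      split <;> omega

end Key


/-- The first and last bottom cells impose no 213-condition: the number of 213-avoiding
transversals of `Y` with the bottom-row 1 placed in the first (column `0`) or last
(column `b 0 - 1`) bottom cell equals `T(Yʳ)`, where `Yʳ` deletes the bottom row and
one column. -/
theorem extreme_bottom_cells (n : ℕ) (b : ℕ → ℕ) (hn : 0 < n)
    (hY : IsYoungShape n b) (c : Fin n) (hcb : (c : ℕ) < b 0)
    (hc : (c : ℕ) = 0 ∨ (c : ℕ) = b 0 - 1) :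
    Nat.card {π : Equiv.Perm (Fin n) //
        IsTransversal n b π ∧ ¬ ShapeContains n b ⇑π (![1,0,2] : Fin 3 → Fin 3) ∧
        π c = ⟨0, hn⟩}
      = T (n - 1) (fun i => b (i + 1) - 1) := by
  obtain ⟨m, rfl⟩ : ∃ m, n = m + 1 := ⟨n - 1, (Nat.succ_pred_eq_of_pos hn).symm⟩
  have hz : (⟨0, hn⟩ : Fin (m+1)) = 0 := rfl
  have key : ∀ σ : Equiv.Perm (Fin m),
      (IsTransversal (m+1) b (liftPerm c σ) ∧
        ¬ ShapeContains (m+1) b ⇑(liftPerm c σ) (![1,0,2] : Fin 3 → Fin 3) ∧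
        liftPerm c σ c = ⟨0, hn⟩)
      ↔ (IsTransversal m (fun i => b (i+1) - 1) σ ∧
         ¬ ShapeContains m (fun i => b (i+1) - 1) ⇑σ (![1,0,2] : Fin 3 → Fin 3)) := by
    intro σ
    constructor
    · rintro ⟨h1, h2, -⟩
      exact ⟨(transversal_iff hY hcb hc σ).mp h1,
        fun h => h2 ((contains_iff hY hcb hc σ).mpr h)⟩
    · rintro ⟨h1, h2⟩
      exact ⟨(transversal_iff hY hcb hc σ).mpr h1,
        fun h => h2 ((contains_iff hY hcb hc σ).mp h), (liftPerm_at c σ).trans hz.symm⟩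
  have E : {π : Equiv.Perm (Fin (m+1)) //
      IsTransversal (m+1) b π ∧ ¬ ShapeContains (m+1) b ⇑π (![1,0,2] : Fin 3 → Fin 3) ∧
        π c = ⟨0, hn⟩}
      ≃ {σ : Equiv.Perm (Fin m) // IsTransversal m (fun i => b (i+1) - 1) σ ∧
          ¬ ShapeContains m (fun i => b (i+1) - 1) ⇑σ (![1,0,2] : Fin 3 → Fin 3)} :=
    { toFun := fun p => ⟨dropPerm c p.1 (p.2.2.2.trans hz),
        (key _).mp (by rw [lift_drop]; exact p.2)⟩
      invFun := fun q => ⟨liftPerm c q.1, (key q.1).mpr q.2⟩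
      left_inv := fun p => Subtype.ext (lift_drop c p.1 _)
      right_inv := fun q => Subtype.ext (drop_lift c q.1) }
  rw [Nat.card_congr E]
  rfl
end
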